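/- arXiv:1609.05140 — 6 statements merged into one kernel-verified Lean document; each statement's English description precedes it below -/
import Mathlib

section
/- Intra-Option Policy Gradient Theorem: Fix θ ∈ ℝ^d and assume for every option ω, state s and action a the map θ ↦ π_{ω,θ}(a|s) is differentiable at θ. Then for every initial state-option pair (s₀, ω₀), the map θ ↦ Q_Ω^θ(s₀, ω₀) is differentiable and its gradient equals ∑_{s,ω} μ_Ω(s, ω | s₀, ω₀) ∑_a (∂π_{ω,θ}(a|s)/∂θ) · Q_U^θ(s, ω, a), where μ_Ω(s, ω | s₀, ω₀) = ∑_{k=0}^∞ P_γ^{(k)}(s, ω | s₀, ω₀) is the discounted weighting of state-option pairs along trajectories from (s₀, ω₀). -/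
/-!
Stack `Q_Ω^θ` into a vector `q_θ` indexed by state-option pairs. The Bellman equations say
`q_θ = b_θ + K_θ q_θ`, where `b_θ` is the expected one-step reward and `K_θ = P_γ^{(1)}` is a
nonnegative matrix with row sums `γ < 1`; both are linear in `π_θ`. So `q_θ = (1 - K_θ)⁻¹ b_θ`
and `Dq = (1 - K)⁻¹ (Db + DK q)`. Applying the same Bellman identity with `Dπ` in place of `π`
gives `(Db + DK q)(s, ω) = ∑_a Dπ(a|s) Q_U(s, ω, a)`, and `(1 - K)⁻¹ = ∑_k K^k` is `μ_Ω`.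
-/

open Matrix

attribute [local instance]
  Matrix.linftyOpNormedAddCommGroup Matrix.linftyOpNormedRing
  Matrix.linftyOpNormedAlgebra Matrix.linftyOpNormedSpace

namespace Matrix

variable {n : Type*} [Fintype n]

theorem linfty_opNorm_le_of_nonneg_of_sum_le {m : Type*} [Fintype m] {K : Matrix m n ℝ} {c : ℝ}
    (hc : 0 ≤ c) (hK : ∀ i j, 0 ≤ K i j) (hsum : ∀ i, ∑ j, K i j ≤ c) : ‖K‖ ≤ c := by
  lift c to NNReal using hc
  rw [linfty_opNorm_def, NNReal.coe_le_coe]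
  refine Finset.sup_le fun i _ => ?_
  rw [← NNReal.coe_le_coe, NNReal.coe_sum]
  simpa only [coe_nnnorm, Real.norm_of_nonneg (hK i _)] using hsum i

variable [DecidableEq n]

theorem hasSum_pow_apply {K : Matrix n n ℝ} (hK : ‖K‖ < 1) (i j : n) :
    HasSum (fun k => (K ^ k) i j) (Ring.inverse (1 - K) i j) :=
  (entryLinearMap ℝ ℝ i j).toContinuousLinearMap.hasSum (hasSum_geom_series_inverse K hK)

theorem eq_inverse_mulVec_of_eq_add_mulVec {K : Matrix n n ℝ} {b q : n → ℝ}
    (hK : IsUnit (1 - K)) (hq : q = b + K *ᵥ q) : q = Ring.inverse (1 - K) *ᵥ b := by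
  have : (1 - K) *ᵥ q = b := by rw [sub_mulVec, one_mulVec]; nth_rw 1 [hq]; abel
  rw [← this, mulVec_mulVec, Ring.inverse_mul_cancel _ hK, one_mulVec]

theorem hasFDerivAt_apply_of_eq_add_mulVec {E : Type*} [NormedAddCommGroup E] [NormedSpace ℝ E]
    {K : E → Matrix n n ℝ} {b q : E → n → ℝ} {K' : E →L[ℝ] Matrix n n ℝ} {b' : E →L[ℝ] n → ℝ}
    {θ₀ : E} (hK : HasFDerivAt K K' θ₀) (hb : HasFDerivAt b b' θ₀) (hunit : IsUnit (1 - K θ₀))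
    (hq : ∀ θ, q θ = b θ + K θ *ᵥ q θ) (i : n) {L : E →L[ℝ] ℝ}
    (hL : ∀ h, L h = (Ring.inverse (1 - K θ₀) *ᵥ (b' h + K' h *ᵥ q θ₀)) i) :
    HasFDerivAt (fun θ => q θ i) L θ₀ := by
  obtain ⟨u, hu⟩ := hunit
  set N := fun θ => Ring.inverse (1 - K θ)
  have hinv : (↑u⁻¹ : Matrix n n ℝ) = N θ₀ := by rw [← Ring.inverse_unit u, hu]
  have hN : HasFDerivAt N
      ((-ContinuousLinearMap.mulLeftRight ℝ _ ↑u⁻¹ ↑u⁻¹).comp (-K')) θ₀ := by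
    have h := hasFDerivAt_ringInverse (𝕜 := ℝ) u
    rw [hu] at h
    exact h.comp θ₀ (hK.const_sub 1)
  obtain ⟨D, hD, hDapply⟩ : ∃ D : n → E →L[ℝ] ℝ, (∀ j, HasFDerivAt (fun θ => N θ i j) (D j) θ₀) ∧
      ∀ j h, D j h = (N θ₀ * K' h * N θ₀) i j :=
    ⟨_, fun j => (entryLinearMap ℝ ℝ i j).toContinuousLinearMap.hasFDerivAt.comp θ₀ hN,
      fun j h => by
        change (-((u⁻¹).val * -K' h * (u⁻¹).val)) i j = _
        simp [hinv]⟩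
  -- `1 - K θ` stays invertible near `θ₀`, where `q θ = (1 - K θ)⁻¹ b θ`.
  have hunits : ∀ᶠ θ in nhds θ₀, IsUnit (1 - K θ) :=
    (hK.continuousAt.const_sub 1).eventually (hu ▸ Units.nhds u)
  have heq : (fun θ => q θ i) =ᶠ[nhds θ₀] fun θ => ∑ j, N θ i j * b θ j :=
    hunits.mono fun θ hθ => congrFun (eq_inverse_mulVec_of_eq_add_mulVec hθ (hq θ)) i
  have hbj (j : n) := (ContinuousLinearMap.proj j).hasFDerivAt.comp θ₀ hb
  refine (HasFDerivAt.fun_sum fun j _ => (hD j).mul (hbj j)).congr_of_eventuallyEq heq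
    |>.congr_fderiv ?_
  ext h
  have hq₀ : q θ₀ = N θ₀ *ᵥ b θ₀ := eq_inverse_mulVec_of_eq_add_mulVec (hu ▸ u.isUnit) (hq θ₀)
  rw [hL, hq₀, mulVec_add, mulVec_mulVec, mulVec_mulVec, Pi.add_apply]
  simp [hDapply, N, mulVec, dotProduct, Finset.sum_add_distrib, mul_comm]

end Matrix

section OptionMDP

variable {S A O : Type*} [Fintype S] [Fintype A] [Fintype O] [DecidableEq O]
  (P : S → A → S → ℝ) (γ : ℝ) (β : O → S → ℝ) (πΩ : S → O → ℝ)

/-- Linear in the intra-option weights `c ω s a`; at `c = π_θ` this is `P_γ^{(1)}`. -/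
def optionKernel : (O → S → A → ℝ) →ₗ[ℝ] Matrix (S × O) (S × O) ℝ where
  toFun c := Matrix.of fun x z => ∑ a, c x.2 x.1 a * (γ * P x.1 a z.1) *
    ((1 - β x.2 z.1) * (if z.2 = x.2 then 1 else 0) + β x.2 z.1 * πΩ z.1 z.2)
  map_add' c c' := by ext; simp [add_mul, Finset.sum_add_distrib]
  map_smul' t c := by ext; simp [Finset.mul_sum, mul_assoc]

theorem optionKernel_mulVec (c : O → S → A → ℝ) (q : S × O → ℝ) (x : S × O) :
    (optionKernel P γ β πΩ c *ᵥ q) x = ∑ a, c x.2 x.1 a *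
      (γ * ∑ s', P x.1 a s' *
        ((1 - β x.2 s') * q (s', x.2) + β x.2 s' * ∑ ω', πΩ s' ω' * q (s', ω'))) := by
  simp only [optionKernel, LinearMap.coe_mk, AddHom.coe_mk, mulVec, dotProduct, of_apply,
    Fintype.sum_prod_type]
  have hcont (s' : S) :
      ∑ ω', ((1 - β x.2 s') * (if ω' = x.2 then 1 else 0) + β x.2 s' * πΩ s' ω') * q (s', ω')
        = (1 - β x.2 s') * q (s', x.2) + β x.2 s' * ∑ ω', πΩ s' ω' * q (s', ω') := by
    simp [add_mul, Finset.sum_add_distrib, Finset.mul_sum, mul_assoc]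
  simp_rw [← hcont]
  simp only [Finset.mul_sum, Finset.sum_mul]
  rw [Finset.sum_congr rfl fun s' _ => Finset.sum_comm, Finset.sum_comm]
  exact Finset.sum_congr rfl fun a _ => Finset.sum_congr rfl fun s' _ =>
    Finset.sum_congr rfl fun ω' _ => by ring

omit [Fintype S] [Fintype O] in
theorem optionKernel_nonneg (hP : ∀ s a s', 0 ≤ P s a s') (hγ : 0 ≤ γ) (hβ0 : ∀ ω s, 0 ≤ β ω s)
    (hβ1 : ∀ ω s, β ω s ≤ 1) (hπΩ : ∀ s ω, 0 ≤ πΩ s ω) {c : O → S → A → ℝ}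
    (hc : ∀ ω s a, 0 ≤ c ω s a) (x z : S × O) : 0 ≤ optionKernel P γ β πΩ c x z := by
  refine Finset.sum_nonneg fun a _ => ?_
  have := hc x.2 x.1 a; have := hP x.1 a z.1; have := hβ0 x.2 z.1; have := hπΩ z.1 z.2
  have := sub_nonneg.2 (hβ1 x.2 z.1)
  positivity

theorem sum_optionKernel (hP : ∀ s a, ∑ s', P s a s' = 1) (hπΩ : ∀ s, ∑ ω, πΩ s ω = 1)
    (c : O → S → A → ℝ) (x : S × O) :
    ∑ z, optionKernel P γ β πΩ c x z = γ * ∑ a, c x.2 x.1 a := by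
  have := optionKernel_mulVec P γ β πΩ c (fun _ => 1) x
  simp only [mul_one, hπΩ, sub_add_cancel, hP] at this
  rw [Finset.mul_sum]
  simpa [mulVec, dotProduct, mul_comm] using this

variable {P γ β πΩ}

def expectedReward (r : S → A → ℝ) : (O → S → A → ℝ) →ₗ[ℝ] (S × O → ℝ) where
  toFun c x := ∑ a, c x.2 x.1 a * r x.1 a
  map_add' c c' := by ext; simp [add_mul, Finset.sum_add_distrib]
  map_smul' t c := by ext; simp [Finset.mul_sum, mul_assoc]

theorem expectedReward_add_optionKernel_mulVec {r : S → A → ℝ} {q : S × O → ℝ}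
    {u : O → S → ℝ} {qU : S → O → A → ℝ}
    (hqU : ∀ s ω a, qU s ω a = r s a + γ * ∑ s', P s a s' * u ω s')
    (hu : ∀ ω s', u ω s' = (1 - β ω s') * q (s', ω) + β ω s' * ∑ ω', πΩ s' ω' * q (s', ω'))
    (c : O → S → A → ℝ) (x : S × O) :
    (expectedReward r c + optionKernel P γ β πΩ c *ᵥ q) x = ∑ a, c x.2 x.1 a * qU x.1 x.2 a := by
  simp only [Pi.add_apply, optionKernel_mulVec, ← hu, expectedReward, LinearMap.coe_mk,
    AddHom.coe_mk, ← Finset.sum_add_distrib, hqU, mul_add]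

end OptionMDP

/-- **Intra-Option Policy Gradient Theorem.** For a finite MDP with options, if every
intra-option policy probability `π θ ω s a` is differentiable at `θ₀`, then the
option-value function `θ ↦ Q θ s₀ ω₀` is differentiable at `θ₀` with gradient
`∑_{s,ω} μ_Ω(s,ω|s₀,ω₀) ∑_a ∂π_{ω,θ}(a|s)/∂θ · Q_U(s,ω,a)`, where
`μ_Ω(s,ω|s₀,ω₀) = ∑_{k=0}^∞ P_γ^{(k)}(s,ω|s₀,ω₀)`. -/
theorem intra_option_policy_gradient
    {S A O : Type*} [Fintype S] [Fintype A] [Fintype O]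
    [DecidableEq S] [DecidableEq O]
    {d : ℕ} (θ₀ : Fin d → ℝ)
    (P : S → A → S → ℝ) (r : S → A → ℝ) (γ : ℝ)
    (hP0 : ∀ s a s', 0 ≤ P s a s') (hP1 : ∀ s a, ∑ s', P s a s' = 1)
    (hγ0 : 0 ≤ γ) (hγ1 : γ < 1)
    (π : (Fin d → ℝ) → O → S → A → ℝ)
    (hπ0 : ∀ θ ω s a, 0 ≤ π θ ω s a) (hπ1 : ∀ θ ω s, ∑ a, π θ ω s a = 1)
    (β : O → S → ℝ) (hβ0 : ∀ ω s, 0 ≤ β ω s) (hβ1 : ∀ ω s, β ω s ≤ 1)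
    (πΩ : S → O → ℝ) (hπΩ0 : ∀ s ω, 0 ≤ πΩ s ω) (hπΩ1 : ∀ s, ∑ ω, πΩ s ω = 1)
    (Q : (Fin d → ℝ) → S → O → ℝ) (U : (Fin d → ℝ) → O → S → ℝ)
    (QU : (Fin d → ℝ) → S → O → A → ℝ)
    (hQ : ∀ θ s ω, Q θ s ω = ∑ a, π θ ω s a * QU θ s ω a)
    (hQU : ∀ θ s ω a, QU θ s ω a = r s a + γ * ∑ s', P s a s' * U θ ω s')
    (hU : ∀ θ ω s', U θ ω s' =
      (1 - β ω s') * Q θ s' ω + β ω s' * ∑ ω', πΩ s' ω' * Q θ s' ω')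
    -- the k-step discounted augmented transition kernel at `θ₀`
    (Pk : ℕ → (S × O) → (S × O) → ℝ)
    (hPk0 : ∀ x y, Pk 0 x y = if x = y then 1 else 0)
    (hPkS : ∀ k x y, Pk (k + 1) x y = ∑ z : S × O,
      (∑ a, π θ₀ x.2 x.1 a * (γ * P x.1 a z.1) *
        ((1 - β x.2 z.1) * (if z.2 = x.2 then 1 else 0) + β x.2 z.1 * πΩ z.1 z.2))
        * Pk k z y)
    (hπdiff : ∀ ω s a, DifferentiableAt ℝ (fun θ => π θ ω s a) θ₀)
    (s₀ : S) (ω₀ : O) :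
    HasFDerivAt (fun θ => Q θ s₀ ω₀)
      (∑ s, ∑ ω, (∑' k, Pk k (s₀, ω₀) (s, ω)) •
        ∑ a, QU θ₀ s ω a • fderiv ℝ (fun θ => π θ ω s a) θ₀) θ₀ := by
  set K := fun θ => optionKernel P γ β πΩ (π θ)
  set q := fun θ (x : S × O) => Q θ x.1 x.2
  have hBellman (θ) := expectedReward_add_optionKernel_mulVec (q := q θ) (hQU θ) (hU θ)
  have hfix : ∀ θ, q θ = expectedReward r (π θ) + K θ *ᵥ q θ := fun θ =>
    funext fun x => (hQ θ x.1 x.2).trans (hBellman θ (π θ) x).symm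
  have hnorm : ‖K θ₀‖ < 1 := by
    refine (linfty_opNorm_le_of_nonneg_of_sum_le hγ0
      (optionKernel_nonneg P γ β πΩ hP0 hγ0 hβ0 hβ1 hπΩ0 (hπ0 θ₀)) fun x => ?_).trans_lt hγ1
    rw [sum_optionKernel P γ β πΩ hP1 hπΩ1, hπ1, mul_one]
  have hPk : ∀ k x y, Pk k x y = (K θ₀ ^ k) x y := by
    intro k
    induction k with
    | zero => simp [hPk0, one_apply]
    | succ k ih => intro x y; simp [hPkS, pow_succ', mul_apply, ih, K, optionKernel]
  have hμ : ∀ y, ∑' k, Pk k (s₀, ω₀) y = Ring.inverse (1 - K θ₀) (s₀, ω₀) y := fun y => by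
    simp_rw [hPk]
    exact (hasSum_pow_apply hnorm _ _).tsum_eq
  set π' : (Fin d → ℝ) →L[ℝ] (O → S → A → ℝ) := .pi fun ω => .pi fun s => .pi fun a =>
    fderiv ℝ (fun θ => π θ ω s a) θ₀
  have hπ' : HasFDerivAt π π' θ₀ := hasFDerivAt_pi.2 fun ω => hasFDerivAt_pi.2 fun s =>
    hasFDerivAt_pi.2 fun a => (hπdiff ω s a).hasFDerivAt
  refine hasFDerivAt_apply_of_eq_add_mulVec
    ((optionKernel P γ β πΩ).toContinuousLinearMap.hasFDerivAt.comp θ₀ hπ')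
    ((expectedReward r).toContinuousLinearMap.hasFDerivAt.comp θ₀ hπ')
    (Units.oneSub _ hnorm).isUnit hfix (s₀, ω₀) fun h => ?_
  change _ = (Ring.inverse (1 - K θ₀) *ᵥ
    (expectedReward r (π' h) + optionKernel P γ β πΩ (π' h) *ᵥ q θ₀)) (s₀, ω₀)
  rw [funext (hBellman θ₀ (π' h))]
  simp [mulVec, dotProduct, hμ, Fintype.sum_prod_type, π', mul_comm]
end

section
/- Termination Gradient Theorem: Fix ϑ ∈ ℝ^m and assume for every option ω and state s the map ϑ ↦ β_{ω,ϑ}(s) is differentiable at ϑ. Then for every initial pair (s₁, ω₀), the map ϑ ↦ U^ϑ(ω₀, s₁) is differentiable and its gradient equals −∑_{s',ω} μ̃_Ω(s', ω | s₁, ω₀) (∂β_{ω,ϑ}(s')/∂ϑ) · A_Ω^ϑ(s', ω), where A_Ω^ϑ(s', ω) = Q_Ω^ϑ(s', ω) − V_Ω^ϑ(s') is the advantage function over options, and μ̃_Ω(s', ω | s₁, ω₀) = ∑_{k=0}^∞ P̃_γ^{(k)}(s', ω | s₁, ω₀) is the discounted weighting of state-option pairs along the shifted augmented chain started at (s₁,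 ω₀). -/
/-!
Index states by pairs `x = (s, ω)` of a state and the option in force on arrival, and write
`Ũ_ϑ x = U ϑ ω s`. One step of the call-and-return equations gives
`Ũ_ϑ - Ũ_ϑ₀ = w_ϑ + P̃_ϑ (Ũ_ϑ - Ũ_ϑ₀)`, where `P̃_ϑ` is the shifted one-step kernel and
`w_ϑ (s, ω) = (β ϑ ω s - β ϑ₀ ω s) (V_Ω(s) - Q_Ω(s, ω))` with `Q_Ω, V_Ω` taken at `ϑ₀`.
The rows of `P̃_ϑ` sum to `γ < 1`, so `1 - P̃_ϑ` is invertible, its inverse is continuous in `ϑ`,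
and `Ũ_ϑ - Ũ_ϑ₀ = (1 - P̃_ϑ)⁻¹ w_ϑ`. As `w_ϑ₀ = 0`, the derivative at `ϑ₀` only sees the
derivative of `w`, weighted by the Neumann series `(1 - P̃_ϑ₀)⁻¹ = ∑ₖ P̃_ϑ₀ᵏ = μ̃_Ω`.
-/

open Asymptotics Topology Matrix

theorem HasFDerivAt.smul_of_continuousAt_of_eq_zero {𝕜 E F : Type*} [NontriviallyNormedField 𝕜]
    [NormedAddCommGroup E] [NormedSpace 𝕜 E] [NormedAddCommGroup F] [NormedSpace 𝕜 F]
    {a : E → 𝕜} {w : E → F} {w' : E →L[𝕜] F} {x : E}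
    (ha : ContinuousAt a x) (hw : HasFDerivAt w w' x) (hw0 : w x = 0) :
    HasFDerivAt (fun y => a y • w y) (a x • w') x := by
  refine .of_isLittleO ?_
  have hmain : (fun y => a y • (w y - w x - w' (y - x))) =o[𝓝 x] fun y => (1 : 𝕜) • (y - x) :=
    (ha.tendsto.isBigO_one 𝕜).smul_isLittleO hw.isLittleO
  have hrest : (fun y => (a y - a x) • w' (y - x)) =o[𝓝 x] fun y => (1 : 𝕜) • (y - x) :=
    ((isLittleO_one_iff 𝕜).2 (tendsto_sub_nhds_zero_iff.2 ha.tendsto)).smul_isBigO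
      (w'.isBigO_sub _ _)
  simp only [one_smul] at hmain hrest
  refine (hmain.add hrest).congr (fun y => ?_) fun _ => rfl
  simp only [hw0, smul_sub, sub_smul, FunLike.coe_smul, Pi.smul_apply, smul_zero, sub_zero]
  abel

section Neumann

variable {X 𝕜 : Type*} [Fintype X] [DecidableEq X]

theorem Matrix.eq_pow_of_apply_succ [Semiring 𝕜] (M : Matrix X X 𝕜) (Pk : ℕ → X → X → 𝕜)
    (h0 : ∀ x y, Pk 0 x y = if x = y then 1 else 0)
    (hS : ∀ k x y, Pk (k + 1) x y = ∑ z, M x z * Pk k z y) (k : ℕ) :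
    Pk k = M ^ k := by
  induction k with
  | zero => ext x y; simp [h0, one_apply]
  | succ k ih => ext x y; rw [hS, pow_succ', mul_apply, ih]

variable [NontriviallyNormedField 𝕜]

attribute [local instance] Matrix.linftyOpNormedRing Matrix.linftyOpNormedAlgebra

theorem Matrix.linfty_opNorm_lt_one_of_sum_norm_lt_one {M : Matrix X X 𝕜}
    (hM : ∀ x, ∑ z, ‖M x z‖ < 1) : ‖M‖ < 1 := by
  rw [linfty_opNorm_def, ← NNReal.coe_one, NNReal.coe_lt_coe,
    Finset.sup_lt_iff zero_lt_one]
  exact fun x _ => by simpa [← NNReal.coe_lt_coe] using hM x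

variable [CompleteSpace 𝕜]

-- `Matrix.instCompleteSpace` carries the product uniformity, which instance search does not
-- identify with the one induced by the `L∞` operator norm.
theorem Matrix.linftyOp_hasSummableGeomSeries : HasSummableGeomSeries (Matrix X X 𝕜) :=
  @instHasSummableGeomSeriesOfCompleteSpace _ _ (FiniteDimensional.complete 𝕜 _)

attribute [local instance] Matrix.linftyOp_hasSummableGeomSeries

theorem Matrix.isUnit_det_one_sub_of_sum_norm_lt_one {M : Matrix X X 𝕜}
    (hM : ∀ x, ∑ z, ‖M x z‖ < 1) : IsUnit (1 - M).det :=
  (isUnit_iff_isUnit_det _).1 (isUnit_one_sub_of_norm_lt_one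
    (linfty_opNorm_lt_one_of_sum_norm_lt_one hM))

theorem Matrix.hasSum_pow_apply_of_sum_norm_lt_one {M : Matrix X X 𝕜}
    (hM : ∀ x, ∑ z, ‖M x z‖ < 1) (x y : X) :
    HasSum (fun k => (M ^ k) x y) ((1 - M)⁻¹ x y) := by
  have h := hasSum_geom_series_inverse M (linfty_opNorm_lt_one_of_sum_norm_lt_one hM)
  rw [← nonsing_inv_eq_ringInverse] at h
  exact Pi.hasSum.1 (Pi.hasSum.1 h x) y

end Neumann

theorem hasFDerivAt_apply_of_sub_eq_mulVec {X 𝕜 E : Type*} [Fintype X] [DecidableEq X]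
    [NontriviallyNormedField 𝕜] [NormedAddCommGroup E] [NormedSpace 𝕜 E]
    {M : E → Matrix X X 𝕜} {u w : E → X → 𝕜} {D : X → E →L[𝕜] 𝕜} {ϑ₀ : E}
    (hM : ContinuousAt M ϑ₀) (hdet : IsUnit (1 - M ϑ₀).det)
    (hrec : ∀ ϑ, u ϑ - u ϑ₀ = w ϑ + M ϑ *ᵥ (u ϑ - u ϑ₀))
    (hw : ∀ x, HasFDerivAt (fun ϑ => w ϑ x) (D x) ϑ₀) (hw0 : w ϑ₀ = 0) (x₁ : X) :
    HasFDerivAt (fun ϑ => u ϑ x₁) (∑ y, (1 - M ϑ₀)⁻¹ x₁ y • D y) ϑ₀ := by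
  have hsub : ContinuousAt (fun ϑ => 1 - M ϑ) ϑ₀ := continuousAt_const.sub hM
  have hinv : ContinuousAt (fun ϑ => (1 - M ϑ)⁻¹) ϑ₀ :=
    (continuousAt_matrix_inv _ (NormedRing.inverse_continuousAt hdet.unit)).comp
      (f := fun ϑ => 1 - M ϑ) hsub
  have hunit : ∀ᶠ ϑ in 𝓝 ϑ₀, IsUnit (1 - M ϑ).det :=
    (continuous_id.matrix_det.continuousAt.comp hsub).eventually (Units.isOpen.mem_nhds hdet)
  have hsolve : ∀ᶠ ϑ in 𝓝 ϑ₀, u ϑ x₁ = u ϑ₀ x₁ + ∑ y, (1 - M ϑ)⁻¹ x₁ y • w ϑ y := by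
    filter_upwards [hunit] with ϑ hϑ
    have : (1 - M ϑ) *ᵥ (u ϑ - u ϑ₀) = w ϑ := by
      rw [sub_mulVec, one_mulVec, sub_eq_iff_eq_add, ← hrec]
    have hd : u ϑ - u ϑ₀ = (1 - M ϑ)⁻¹ *ᵥ w ϑ := by
      rw [← this, mulVec_mulVec, nonsing_inv_mul _ hϑ, one_mulVec]
    simpa [mulVec, dotProduct, sub_eq_iff_eq_add'] using congrFun hd x₁
  refine HasFDerivAt.congr_of_eventuallyEq ?_ hsolve
  refine (HasFDerivAt.fun_sum fun y _ => ?_).const_add _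
  exact HasFDerivAt.smul_of_continuousAt_of_eq_zero
    (continuousAt_apply y _ |>.comp (continuousAt_apply x₁ _ |>.comp hinv)) (hw y)
    (congrFun hw0 y)

section OptionKernel

variable {S A O : Type*} [Fintype A]
  (P : S → A → S → ℝ) (γ : ℝ) (π : O → S → A → ℝ) (πΩ : S → O → ℝ)

def discountedStepKernel (ω : O) (s s'' : S) : ℝ := ∑ a, π ω s a * (γ * P s a s'')

-- The kernel `P̃_γ^{(1)}` with termination probabilities `b`: rows are indexed by `(s', ω)`,
-- columns by `(s'', ω')`.
def augmentedKernel [DecidableEq O] (b : O → S → ℝ) : Matrix (S × O) (S × O) ℝ := fun x z =>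
  ((1 - b x.2 x.1) * (if z.2 = x.2 then 1 else 0) + b x.2 x.1 * πΩ x.1 z.2) *
    discountedStepKernel P γ π z.2 x.1 z.1

theorem augmentedKernel_mulVec [Fintype S] [Fintype O] [DecidableEq O] (b : O → S → ℝ)
    (g : S × O → ℝ) (s : S) (ω : O) :
    (augmentedKernel P γ π πΩ b *ᵥ g) (s, ω) =
      (1 - b ω s) * ∑ s'', discountedStepKernel P γ π ω s s'' * g (s'', ω) +
        b ω s * ∑ ω', πΩ s ω' * ∑ s'', discountedStepKernel P γ π ω' s s'' * g (s'', ω') := by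
  simp [mulVec, dotProduct, augmentedKernel, Fintype.sum_prod_type_right, add_mul,
    Finset.sum_add_distrib, Finset.mul_sum, mul_assoc, ite_mul]

variable {P γ π πΩ}

theorem sum_discountedStepKernel [Fintype S] (hP1 : ∀ s a, ∑ s', P s a s' = 1)
    (hπ1 : ∀ ω s, ∑ a, π ω s a = 1) (ω : O) (s : S) :
    ∑ s'', discountedStepKernel P γ π ω s s'' = γ := by
  simp only [discountedStepKernel]
  rw [Finset.sum_comm]
  simp [← Finset.mul_sum, hP1, ← Finset.sum_mul, hπ1]

theorem sum_norm_augmentedKernel [Fintype S] [Fintype O] [DecidableEq O] {b : O → S → ℝ}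
    (hP0 : ∀ s a s', 0 ≤ P s a s') (hP1 : ∀ s a, ∑ s', P s a s' = 1) (hγ0 : 0 ≤ γ)
    (hπ0 : ∀ ω s a, 0 ≤ π ω s a) (hπ1 : ∀ ω s, ∑ a, π ω s a = 1)
    (hb0 : ∀ ω s, 0 ≤ b ω s) (hb1 : ∀ ω s, b ω s ≤ 1)
    (hπΩ0 : ∀ s ω, 0 ≤ πΩ s ω) (hπΩ1 : ∀ s, ∑ ω, πΩ s ω = 1) (x : S × O) :
    ∑ z, ‖augmentedKernel P γ π πΩ b x z‖ = γ := by
  have hnonneg : ∀ z, 0 ≤ augmentedKernel P γ π πΩ b x z := fun z =>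
    mul_nonneg
      (add_nonneg (mul_nonneg (sub_nonneg.2 (hb1 _ _)) (by split_ifs <;> norm_num))
        (mul_nonneg (hb0 _ _) (hπΩ0 _ _)))
      (Finset.sum_nonneg fun a _ => mul_nonneg (hπ0 _ _ _) (mul_nonneg hγ0 (hP0 _ _ _)))
  have hrow := augmentedKernel_mulVec P γ π πΩ b 1 x.1 x.2
  simp only [Pi.one_apply, mul_one, sum_discountedStepKernel hP1 hπ1, ← Finset.sum_mul,
    hπΩ1] at hrow
  calc ∑ z, ‖augmentedKernel P γ π πΩ b x z‖ = (augmentedKernel P γ π πΩ b *ᵥ 1) x := by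
        simp [Real.norm_of_nonneg (hnonneg _), mulVec, dotProduct]
    _ = γ := by rw [hrow]; ring

theorem continuousAt_augmentedKernel [DecidableEq O] {E : Type*} [TopologicalSpace E]
    {b : E → O → S → ℝ} {ϑ₀ : E} (hb : ∀ ω s, ContinuousAt (fun ϑ => b ϑ ω s) ϑ₀) :
    ContinuousAt (fun ϑ => augmentedKernel P γ π πΩ (b ϑ)) ϑ₀ :=
  continuousAt_pi.2 fun x => continuousAt_pi.2 fun _ =>
    (((continuousAt_const.sub (hb x.2 x.1)).mul continuousAt_const).add
      ((hb x.2 x.1).mul continuousAt_const)).mul continuousAt_const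

theorem sum_discountedStepKernel_mul [Fintype S] {r : S → A → ℝ} {Q : S → O → ℝ}
    {U : O → S → ℝ} {QU : S → O → A → ℝ} (hQ : ∀ s ω, Q s ω = ∑ a, π ω s a * QU s ω a)
    (hQU : ∀ s ω a, QU s ω a = r s a + γ * ∑ s', P s a s' * U ω s') (ω : O) (s : S) :
    ∑ s'', discountedStepKernel P γ π ω s s'' * U ω s'' = Q s ω - ∑ a, π ω s a * r s a := by
  simp only [hQ, hQU, discountedStepKernel, mul_add, Finset.sum_add_distrib, Finset.mul_sum,
    Finset.sum_mul, add_sub_cancel_left]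
  rw [Finset.sum_comm]
  exact Finset.sum_congr rfl fun a _ => Finset.sum_congr rfl fun s'' _ => by ring

theorem arrivalValue_sub_eq [Fintype S] [Fintype O] [DecidableEq O] {Θ : Type*}
    {r : S → A → ℝ} {β : Θ → O → S → ℝ} {Q : Θ → S → O → ℝ} {U : Θ → O → S → ℝ}
    {QU : Θ → S → O → A → ℝ}
    (hQ : ∀ ϑ s ω, Q ϑ s ω = ∑ a, π ω s a * QU ϑ s ω a)
    (hQU : ∀ ϑ s ω a, QU ϑ s ω a = r s a + γ * ∑ s', P s a s' * U ϑ ω s')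
    (hU : ∀ ϑ ω s', U ϑ ω s' =
      (1 - β ϑ ω s') * Q ϑ s' ω + β ϑ ω s' * ∑ ω', πΩ s' ω' * Q ϑ s' ω') (ϑ ϑ₀ : Θ) :
    (fun x : S × O => U ϑ x.2 x.1) - (fun x => U ϑ₀ x.2 x.1) =
      (fun x => (β ϑ x.2 x.1 - β ϑ₀ x.2 x.1) * (∑ ω', πΩ x.1 ω' * Q ϑ₀ x.1 ω' - Q ϑ₀ x.1 x.2)) +
        augmentedKernel P γ π πΩ (β ϑ) *ᵥ
          ((fun x : S × O => U ϑ x.2 x.1) - (fun x => U ϑ₀ x.2 x.1)) := by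
  have hstep : ∀ ω s, ∑ s'', discountedStepKernel P γ π ω s s'' * (U ϑ ω s'' - U ϑ₀ ω s'') =
      Q ϑ s ω - Q ϑ₀ s ω := fun ω s => by
    simp only [mul_sub, Finset.sum_sub_distrib, sum_discountedStepKernel_mul (hQ ϑ) (hQU ϑ),
      sum_discountedStepKernel_mul (hQ ϑ₀) (hQU ϑ₀)]
    ring
  ext ⟨s, ω⟩
  rw [Pi.add_apply, augmentedKernel_mulVec]
  simp only [Pi.sub_apply, hstep]
  simp only [mul_sub, Finset.sum_sub_distrib]
  rw [hU ϑ, hU ϑ₀]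
  ring

end OptionKernel

/-- **Termination Gradient Theorem.** For a finite MDP with options, if every
termination probability `β ϑ ω s` is differentiable at `ϑ₀`, then the value upon
arrival `ϑ ↦ U ϑ ω₀ s₁` is differentiable at `ϑ₀` with gradient
`−∑_{s',ω} μ̃_Ω(s',ω|s₁,ω₀) ∂β_{ω,ϑ}(s')/∂ϑ · A_Ω(s',ω)`, where
`A_Ω(s',ω) = Q_Ω(s',ω) − V_Ω(s')` and `μ̃_Ω = ∑_{k=0}^∞ P̃_γ^{(k)}` is the
discounted weighting along the shifted augmented chain. -/
theorem termination_gradient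
    {S A O : Type*} [Fintype S] [Fintype A] [Fintype O]
    [DecidableEq S] [DecidableEq O]
    {m : ℕ} (ϑ₀ : Fin m → ℝ)
    (P : S → A → S → ℝ) (r : S → A → ℝ) (γ : ℝ)
    (hP0 : ∀ s a s', 0 ≤ P s a s') (hP1 : ∀ s a, ∑ s', P s a s' = 1)
    (hγ0 : 0 ≤ γ) (hγ1 : γ < 1)
    (π : O → S → A → ℝ)
    (hπ0 : ∀ ω s a, 0 ≤ π ω s a) (hπ1 : ∀ ω s, ∑ a, π ω s a = 1)
    (β : (Fin m → ℝ) → O → S → ℝ)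
    (hβ0 : ∀ ϑ ω s, 0 ≤ β ϑ ω s) (hβ1 : ∀ ϑ ω s, β ϑ ω s ≤ 1)
    (πΩ : S → O → ℝ) (hπΩ0 : ∀ s ω, 0 ≤ πΩ s ω) (hπΩ1 : ∀ s, ∑ ω, πΩ s ω = 1)
    (Q : (Fin m → ℝ) → S → O → ℝ) (U : (Fin m → ℝ) → O → S → ℝ)
    (QU : (Fin m → ℝ) → S → O → A → ℝ)
    (hQ : ∀ ϑ s ω, Q ϑ s ω = ∑ a, π ω s a * QU ϑ s ω a)
    (hQU : ∀ ϑ s ω a, QU ϑ s ω a = r s a + γ * ∑ s', P s a s' * U ϑ ω s')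
    (hU : ∀ ϑ ω s', U ϑ ω s' =
      (1 - β ϑ ω s') * Q ϑ s' ω + β ϑ ω s' * ∑ ω', πΩ s' ω' * Q ϑ s' ω')
    -- the k-step shifted discounted augmented transition kernel at `ϑ₀`
    (Pk : ℕ → (S × O) → (S × O) → ℝ)
    (hPk0 : ∀ x y, Pk 0 x y = if x = y then 1 else 0)
    (hPkS : ∀ k x y, Pk (k + 1) x y = ∑ z : S × O,
      (((1 - β ϑ₀ x.2 x.1) * (if z.2 = x.2 then 1 else 0) + β ϑ₀ x.2 x.1 * πΩ x.1 z.2) *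
        ∑ a, π z.2 x.1 a * (γ * P x.1 a z.1)) * Pk k z y)
    (hβdiff : ∀ ω s, DifferentiableAt ℝ (fun ϑ => β ϑ ω s) ϑ₀)
    (s₁ : S) (ω₀ : O) :
    HasFDerivAt (fun ϑ => U ϑ ω₀ s₁)
      (-∑ s', ∑ ω, (∑' k, Pk k (s₁, ω₀) (s', ω)) •
        ((Q ϑ₀ s' ω - ∑ ω', πΩ s' ω' * Q ϑ₀ s' ω') •
          fderiv ℝ (fun ϑ => β ϑ ω s') ϑ₀)) ϑ₀ := by
  have hrow : ∀ x, ∑ z, ‖augmentedKernel P γ π πΩ (β ϑ₀) x z‖ < 1 := fun x =>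
    (sum_norm_augmentedKernel hP0 hP1 hγ0 hπ0 hπ1 (hβ0 ϑ₀) (hβ1 ϑ₀) hπΩ0 hπΩ1 x).trans_lt hγ1
  have hPk : ∀ k, Pk k = augmentedKernel P γ π πΩ (β ϑ₀) ^ k :=
    Matrix.eq_pow_of_apply_succ _ Pk hPk0 hPkS
  have hderiv := hasFDerivAt_apply_of_sub_eq_mulVec
    (continuousAt_augmentedKernel fun ω s => (hβdiff ω s).continuousAt)
    (Matrix.isUnit_det_one_sub_of_sum_norm_lt_one hrow)
    (arrivalValue_sub_eq hQ hQU hU · ϑ₀)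
    (fun x => ((hβdiff x.2 x.1).hasFDerivAt.sub_const _).mul_const _) (by ext; simp) (s₁, ω₀)
  refine hderiv.congr_fderiv ?_
  simp only [hPk, (Matrix.hasSum_pow_apply_of_sum_norm_lt_one hrow _ _).tsum_eq,
    Fintype.sum_prod_type, ← Finset.sum_neg_distrib]
  refine Finset.sum_congr rfl fun s _ => Finset.sum_congr rfl fun ω _ => ?_
  rw [← neg_sub (Q ϑ₀ s ω), neg_smul, smul_neg]
end

section
/- One-step gradient recursion in the intra-option policy parameters: under the assumptions of the Intra-Option Policy Gradient Theorem, for every state-option pair (s, ω), ∂Q_Ω^θ(s,ω)/∂θ = ∑_a (∂π_{ω,θ}(a|s)/∂θ) Q_U^θ(s,ω,a) + ∑_{s'} ∑_{ω'} P_γ^{(1)}(s', ω' | s, ω) ∂Q_Ω^θ(s',ω')/∂θ. -/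
/-!
Differentiate the three Bellman equations in `θ`. Only `π` depends on `θ` explicitly, so the
product rule on `Q_Ω = ∑ₐ π Q_U` gives the `∂π` term plus `∑ₐ π ∂Q_U`, while `∂Q_U` and `∂U`
are combinations of `∂Q_Ω` with `θ`-independent coefficients; collecting these coefficients
gives exactly `P_γ^{(1)}`.
-/

open Finset

section

variable {𝕜 E : Type*} [NontriviallyNormedField 𝕜] [NormedAddCommGroup E] [NormedSpace 𝕜 E]
  {ι : Type*} [Fintype ι]

theorem hasFDerivAt_sum_const_mul {f : ι → E → 𝕜} {f' : ι → E →L[𝕜] 𝕜} {x : E} (c : ι → 𝕜)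
    (hf : ∀ i, HasFDerivAt (f i) (f' i) x) :
    HasFDerivAt (fun y => ∑ i, c i * f i y) (∑ i, c i • f' i) x :=
  HasFDerivAt.fun_sum fun i _ => (hf i).const_mul (c i)

theorem hasFDerivAt_sum_mul {f g : ι → E → 𝕜} {f' g' : ι → E →L[𝕜] 𝕜} {x : E}
    (hf : ∀ i, HasFDerivAt (f i) (f' i) x) (hg : ∀ i, HasFDerivAt (g i) (g' i) x) :
    HasFDerivAt (fun y => ∑ i, f i y * g i y) (∑ i, (g i x • f' i + f i x • g' i)) x :=
  HasFDerivAt.fun_sum fun i _ => by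
    rw [add_comm]
    exact (hf i).mul (hg i)

end

theorem sum_smul_sum_smul_sum_smul {R M α β γ : Type*} [CommSemiring R] [AddCommMonoid M]
    [Module R M] [Fintype α] [Fintype β] [Fintype γ]
    (x : α → R) (y : α → β → R) (z : β → γ → R) (v : β → γ → M) :
    ∑ a, x a • ∑ b, y a b • ∑ c, z b c • v b c = ∑ b, ∑ c, (∑ a, x a * y a b * z b c) • v b c := by
  simp only [smul_sum, smul_smul, sum_smul, mul_assoc]
  rw [sum_comm]
  refine sum_congr rfl fun b _ => ?_
  rw [sum_comm]

/-- Puts the value upon arrival `U` in the form of a single sum over options, whose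
coefficients are the option part of `P_γ^{(1)}`. -/
theorem continuation_value_eq_sum {O : Type*} [Fintype O] [DecidableEq O]
    (b : ℝ) (p q : O → ℝ) (ω : O) :
    (1 - b) * q ω + b * ∑ ω', p ω' * q ω' =
      ∑ ω', ((1 - b) * (if ω' = ω then 1 else 0) + b * p ω') * q ω' := by
  simp only [add_mul, sum_add_distrib, mul_ite, mul_one, mul_zero, ite_mul, zero_mul,
    sum_ite_eq', mem_univ, if_true, mul_sum, mul_assoc]

theorem intra_option_gradient_one_step_recursion_general
    {S A O : Type*} [Fintype S] [Fintype A] [Fintype O]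
    [DecidableEq O]
    {d : ℕ} (θ₀ : Fin d → ℝ)
    (P : S → A → S → ℝ) (r : S → A → ℝ) (γ : ℝ)
    (π : (Fin d → ℝ) → O → S → A → ℝ)
    (β : O → S → ℝ)
    (πΩ : S → O → ℝ)
    (Q : (Fin d → ℝ) → S → O → ℝ) (U : (Fin d → ℝ) → O → S → ℝ)
    (QU : (Fin d → ℝ) → S → O → A → ℝ)
    (hQ : ∀ θ s ω, Q θ s ω = ∑ a, π θ ω s a * QU θ s ω a)
    (hQU : ∀ θ s ω a, QU θ s ω a = r s a + γ * ∑ s', P s a s' * U θ ω s')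
    (hU : ∀ θ ω s', U θ ω s' =
      (1 - β ω s') * Q θ s' ω + β ω s' * ∑ ω', πΩ s' ω' * Q θ s' ω')
    (hπdiff : ∀ ω s a, Differentiable ℝ (fun θ => π θ ω s a))
    (hQdiff : ∀ s ω, Differentiable ℝ (fun θ => Q θ s ω))
    (s : S) (ω : O) :
    fderiv ℝ (fun θ => Q θ s ω) θ₀ =
      (∑ a, QU θ₀ s ω a • fderiv ℝ (fun θ => π θ ω s a) θ₀)
      + ∑ s', ∑ ω',
        (∑ a, π θ₀ ω s a * (γ * P s a s') *
          ((1 - β ω s') * (if ω' = ω then 1 else 0) + β ω s' * πΩ s' ω')) •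
          fderiv ℝ (fun θ => Q θ s' ω') θ₀ := by
  set w : S → O → ℝ := fun s' ω' => (1 - β ω s') * (if ω' = ω then 1 else 0) + β ω s' * πΩ s' ω'
  set D : S → O → (Fin d → ℝ) →L[ℝ] ℝ := fun s' ω' => fderiv ℝ (fun θ => Q θ s' ω') θ₀
  have hDQ : ∀ s' ω', HasFDerivAt (fun θ => Q θ s' ω') (D s' ω') θ₀ :=
    fun s' ω' => (hQdiff s' ω' θ₀).hasFDerivAt
  have hDU : ∀ s', HasFDerivAt (fun θ => U θ ω s') (∑ ω', w s' ω' • D s' ω') θ₀ := fun s' => by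
    simp only [hU, continuation_value_eq_sum]
    exact hasFDerivAt_sum_const_mul _ (hDQ s')
  have hDQU : ∀ a, HasFDerivAt (fun θ => QU θ s ω a)
      (∑ s', (γ * P s a s') • ∑ ω', w s' ω' • D s' ω') θ₀ := fun a => by
    simp only [hQU, mul_sum, ← mul_assoc]
    exact (hasFDerivAt_sum_const_mul _ hDU).const_add _
  have hDπ : ∀ a, HasFDerivAt (fun θ => π θ ω s a) (fderiv ℝ (fun θ => π θ ω s a) θ₀) θ₀ :=
    fun a => (hπdiff ω s a θ₀).hasFDerivAt
  have hDQsω : HasFDerivAt (fun θ => Q θ s ω)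
      (∑ a, (QU θ₀ s ω a • fderiv ℝ (fun θ => π θ ω s a) θ₀
        + π θ₀ ω s a • ∑ s', (γ * P s a s') • ∑ ω', w s' ω' • D s' ω')) θ₀ := by
    simp only [hQ]
    exact hasFDerivAt_sum_mul hDπ hDQU
  rw [hDQsω.fderiv, sum_add_distrib, sum_smul_sum_smul_sum_smul]

/-- **One-step gradient recursion in the intra-option policy parameters.** Under the
assumptions of the Intra-Option Policy Gradient Theorem, for every state-option pair
`(s, ω)`:
`∂Q_Ω(s,ω)/∂θ = ∑_a ∂π_{ω,θ}(a|s)/∂θ · Q_U(s,ω,a)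
  + ∑_{s',ω'} P_γ^{(1)}(s',ω'|s,ω) ∂Q_Ω(s',ω')/∂θ`. -/
theorem intra_option_gradient_one_step_recursion
    {S A O : Type*} [Fintype S] [Fintype A] [Fintype O]
    [DecidableEq S] [DecidableEq O]
    {d : ℕ} (θ₀ : Fin d → ℝ)
    (P : S → A → S → ℝ) (r : S → A → ℝ) (γ : ℝ)
    (hP0 : ∀ s a s', 0 ≤ P s a s') (hP1 : ∀ s a, ∑ s', P s a s' = 1)
    (hγ0 : 0 ≤ γ) (hγ1 : γ < 1)
    (π : (Fin d → ℝ) → O → S → A → ℝ)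
    (hπ0 : ∀ θ ω s a, 0 ≤ π θ ω s a) (hπ1 : ∀ θ ω s, ∑ a, π θ ω s a = 1)
    (β : O → S → ℝ) (hβ0 : ∀ ω s, 0 ≤ β ω s) (hβ1 : ∀ ω s, β ω s ≤ 1)
    (πΩ : S → O → ℝ) (hπΩ0 : ∀ s ω, 0 ≤ πΩ s ω) (hπΩ1 : ∀ s, ∑ ω, πΩ s ω = 1)
    (Q : (Fin d → ℝ) → S → O → ℝ) (U : (Fin d → ℝ) → O → S → ℝ)
    (QU : (Fin d → ℝ) → S → O → A → ℝ)
    (hQ : ∀ θ s ω, Q θ s ω = ∑ a, π θ ω s a * QU θ s ω a)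
    (hQU : ∀ θ s ω a, QU θ s ω a = r s a + γ * ∑ s', P s a s' * U θ ω s')
    (hU : ∀ θ ω s', U θ ω s' =
      (1 - β ω s') * Q θ s' ω + β ω s' * ∑ ω', πΩ s' ω' * Q θ s' ω')
    (hπdiff : ∀ ω s a, Differentiable ℝ (fun θ => π θ ω s a))
    (hQdiff : ∀ s ω, Differentiable ℝ (fun θ => Q θ s ω))
    (s : S) (ω : O) :
    fderiv ℝ (fun θ => Q θ s ω) θ₀ =
      (∑ a, QU θ₀ s ω a • fderiv ℝ (fun θ => π θ ω s a) θ₀)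
      + ∑ s', ∑ ω',
        (∑ a, π θ₀ ω s a * (γ * P s a s') *
          ((1 - β ω s') * (if ω' = ω then 1 else 0) + β ω s' * πΩ s' ω')) •
          fderiv ℝ (fun θ => Q θ s' ω') θ₀ :=
  intra_option_gradient_one_step_recursion_general θ₀ P r γ π β πΩ Q U QU hQ hQU hU hπdiff hQdiff s
    ω
end

section
/- One-step gradient recursion for the value upon arrival in the termination parameters: under the assumptions of the Termination Gradient Theorem, for every option ω and state s', ∂U^ϑ(ω, s')/∂ϑ = −(∂β_{ω,ϑ}(s')/∂ϑ) A_Ω^ϑ(s', ω) + ∑_{ω'} ∑_{s''} P̃_γ^{(1)}(s'', ω' | s', ω) ∂U^ϑ(ω', s'')/∂ϑ, where A_Ω^ϑ(s', ω) = Q_Ω^ϑ(s', ω) − V_Ω^ϑ(s') is the advantage function over options. -/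
/-!
Expanding `U(ω,s') = (1 - β) Q(s',ω) + β V(s')` by the product rule gives
`∂U = -(Q - V) ∂β + (1 - β) ∂Q(s',ω) + β ∂V(s')`, and by the Bellman equations for `Q` and `Q_U`
the gradient of `Q(s',ω')` is the `γ`-discounted one-step average `∑ π P ∂U(ω',·)`. Both remaining
terms are then one-step averages of `∂U`, and their sum is exactly the average against `P̃_γ^{(1)}`.
-/

open Finset

section

variable {E : Type*} [NormedAddCommGroup E] [NormedSpace ℝ E] {x : E}

theorem hasFDerivAt_sum_mul_add_mul_sum {ι S : Type*} [Fintype ι] [Fintype S]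
    {u : E → S → ℝ} {u' : S → E →L[ℝ] ℝ} (hu : ∀ s, HasFDerivAt (u · s) (u' s) x)
    (p r : ι → ℝ) (γ : ℝ) (P : ι → S → ℝ) :
    HasFDerivAt (fun y => ∑ a, p a * (r a + γ * ∑ s, P a s * u y s))
      (∑ s, (∑ a, p a * (γ * P a s)) • u' s) x := by
  refine (HasFDerivAt.fun_sum fun a _ =>
    (((HasFDerivAt.fun_sum fun s _ => (hu s).const_mul (P a s)).const_mul γ).const_add
      (r a)).const_mul (p a)).congr_fderiv ?_
  simp only [smul_sum, sum_smul, smul_smul]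
  exact sum_comm

theorem HasFDerivAt.one_sub_mul_add_mul {q v b : E → ℝ} {q' v' b' : E →L[ℝ] ℝ}
    (hq : HasFDerivAt q q' x) (hv : HasFDerivAt v v' x) (hb : HasFDerivAt b b' x) :
    HasFDerivAt (fun y => (1 - b y) * q y + b y * v y)
      (-((q x - v x) • b') + ((1 - b x) • q' + b x • v')) x := by
  refine (((hb.const_sub 1).mul hq).add (hb.mul hv)).congr_fderiv ?_
  module

end

theorem sum_sum_ite_mul_add_mul_smul {R M O S : Type*} [CommRing R] [AddCommGroup M] [Module R M]
    [Fintype O] [Fintype S] [DecidableEq O] (c b : R) (μ : O → R) (ω : O) (K : O → S → R)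
    (g : O → S → M) :
    ∑ ω', ∑ s, ((c * (if ω' = ω then 1 else 0) + b * μ ω') * K ω' s) • g ω' s =
      c • ∑ s, K ω s • g ω s + b • ∑ ω', μ ω' • ∑ s, K ω' s • g ω' s := by
  simp only [add_mul, add_smul, sum_add_distrib, mul_ite, mul_one, mul_zero, ite_mul, zero_mul,
    ite_smul, zero_smul, sum_ite_irrel, sum_const_zero, sum_ite_eq', mem_univ, if_true, smul_sum,
    smul_smul, mul_assoc]

theorem termination_gradient_one_step_recursion_general
    {S A O : Type*} [Fintype S] [Fintype A] [Fintype O]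
    [DecidableEq O]
    {m : ℕ} (ϑ₀ : Fin m → ℝ)
    (P : S → A → S → ℝ) (r : S → A → ℝ) (γ : ℝ)
    (π : O → S → A → ℝ)
    (β : (Fin m → ℝ) → O → S → ℝ)
    (πΩ : S → O → ℝ)
    (Q : (Fin m → ℝ) → S → O → ℝ) (U : (Fin m → ℝ) → O → S → ℝ)
    (QU : (Fin m → ℝ) → S → O → A → ℝ)
    (hQ : ∀ ϑ s ω, Q ϑ s ω = ∑ a, π ω s a * QU ϑ s ω a)
    (hQU : ∀ ϑ s ω a, QU ϑ s ω a = r s a + γ * ∑ s', P s a s' * U ϑ ω s')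
    (hU : ∀ ϑ ω s', U ϑ ω s' =
      (1 - β ϑ ω s') * Q ϑ s' ω + β ϑ ω s' * ∑ ω', πΩ s' ω' * Q ϑ s' ω')
    (hβdiff : ∀ ω s, Differentiable ℝ (fun ϑ => β ϑ ω s))
    (hUdiff : ∀ ω s, Differentiable ℝ (fun ϑ => U ϑ ω s))
    (ω : O) (s' : S) :
    fderiv ℝ (fun ϑ => U ϑ ω s') ϑ₀ =
      -((Q ϑ₀ s' ω - ∑ ω', πΩ s' ω' * Q ϑ₀ s' ω') •
          fderiv ℝ (fun ϑ => β ϑ ω s') ϑ₀)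
      + ∑ ω', ∑ s'',
        (((1 - β ϑ₀ ω s') * (if ω' = ω then 1 else 0) + β ϑ₀ ω s' * πΩ s' ω') *
          ∑ a, π ω' s' a * (γ * P s' a s'')) •
          fderiv ℝ (fun ϑ => U ϑ ω' s'') ϑ₀ := by
  have hQ' (ω' : O) : HasFDerivAt (fun ϑ => Q ϑ s' ω')
      (∑ s'', (∑ a, π ω' s' a * (γ * P s' a s'')) • fderiv ℝ (fun ϑ => U ϑ ω' s'') ϑ₀) ϑ₀ := by
    simpa only [hQ, hQU] using hasFDerivAt_sum_mul_add_mul_sum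
      (fun s'' => (hUdiff ω' s'' ϑ₀).hasFDerivAt) (π ω' s') (r s') γ (P s')
  have hV' := HasFDerivAt.fun_sum (u := univ) fun ω' _ => (hQ' ω').const_mul (πΩ s' ω')
  have hU' := (hQ' ω).one_sub_mul_add_mul hV' (hβdiff ω s' ϑ₀).hasFDerivAt
  rw [show (fun ϑ => U ϑ ω s') = _ from funext fun ϑ => hU ϑ ω s', hU'.fderiv,
    sum_sum_ite_mul_add_mul_smul _ _ (πΩ s') ω (fun ω' s'' => ∑ a, π ω' s' a * (γ * P s' a s''))
      fun ω' s'' => fderiv ℝ (fun ϑ => U ϑ ω' s'') ϑ₀]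

/-- **One-step gradient recursion for the value upon arrival in the termination
parameters.** Under the assumptions of the Termination Gradient Theorem, for every
option `ω` and state `s'`:
`∂U(ω,s')/∂ϑ = −(∂β_{ω,ϑ}(s')/∂ϑ) A_Ω(s',ω)
  + ∑_{ω',s''} P̃_γ^{(1)}(s'',ω'|s',ω) ∂U(ω',s'')/∂ϑ`,
where `A_Ω(s',ω) = Q_Ω(s',ω) − V_Ω(s')`. -/
theorem termination_gradient_one_step_recursion
    {S A O : Type*} [Fintype S] [Fintype A] [Fintype O]
    [DecidableEq S] [DecidableEq O]
    {m : ℕ} (ϑ₀ : Fin m → ℝ)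
    (P : S → A → S → ℝ) (r : S → A → ℝ) (γ : ℝ)
    (hP0 : ∀ s a s', 0 ≤ P s a s') (hP1 : ∀ s a, ∑ s', P s a s' = 1)
    (hγ0 : 0 ≤ γ) (hγ1 : γ < 1)
    (π : O → S → A → ℝ)
    (hπ0 : ∀ ω s a, 0 ≤ π ω s a) (hπ1 : ∀ ω s, ∑ a, π ω s a = 1)
    (β : (Fin m → ℝ) → O → S → ℝ)
    (hβ0 : ∀ ϑ ω s, 0 ≤ β ϑ ω s) (hβ1 : ∀ ϑ ω s, β ϑ ω s ≤ 1)
    (πΩ : S → O → ℝ) (hπΩ0 : ∀ s ω, 0 ≤ πΩ s ω) (hπΩ1 : ∀ s, ∑ ω, πΩ s ω = 1)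
    (Q : (Fin m → ℝ) → S → O → ℝ) (U : (Fin m → ℝ) → O → S → ℝ)
    (QU : (Fin m → ℝ) → S → O → A → ℝ)
    (hQ : ∀ ϑ s ω, Q ϑ s ω = ∑ a, π ω s a * QU ϑ s ω a)
    (hQU : ∀ ϑ s ω a, QU ϑ s ω a = r s a + γ * ∑ s', P s a s' * U ϑ ω s')
    (hU : ∀ ϑ ω s', U ϑ ω s' =
      (1 - β ϑ ω s') * Q ϑ s' ω + β ϑ ω s' * ∑ ω', πΩ s' ω' * Q ϑ s' ω')
    (hβdiff : ∀ ω s, Differentiable ℝ (fun ϑ => β ϑ ω s))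
    (hQdiff : ∀ s ω, Differentiable ℝ (fun ϑ => Q ϑ s ω))
    (hUdiff : ∀ ω s, Differentiable ℝ (fun ϑ => U ϑ ω s))
    (ω : O) (s' : S) :
    fderiv ℝ (fun ϑ => U ϑ ω s') ϑ₀ =
      -((Q ϑ₀ s' ω - ∑ ω', πΩ s' ω' * Q ϑ₀ s' ω') •
          fderiv ℝ (fun ϑ => β ϑ ω s') ϑ₀)
      + ∑ ω', ∑ s'',
        (((1 - β ϑ₀ ω s') * (if ω' = ω then 1 else 0) + β ϑ₀ ω s' * πΩ s' ω') *
          ∑ a, π ω' s' a * (γ * P s' a s'')) •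
          fderiv ℝ (fun ϑ => U ϑ ω' s'') ϑ₀ :=
  termination_gradient_one_step_recursion_general ϑ₀ P r γ π β πΩ Q U QU hQ hQU hU hβdiff hUdiff ω
    s'
end

section
/- Series expansion of the termination gradient: under the assumptions of the Termination Gradient Theorem, for every option ω and state s', ∂U^ϑ(ω, s')/∂ϑ = −∑_{k=0}^∞ ∑_{ω'', s''} P̃_γ^{(k)}(s'', ω'' | s', ω) (∂β_{ω'',ϑ}(s'')/∂ϑ) A_Ω^ϑ(s'', ω''), where A_Ω^ϑ(s'', ω'') = Q_Ω^ϑ(s'', ω'') − V_Ω^ϑ(s'') and the series converges absolutely. -/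
/-!
Differentiating the Bellman equations for `Q_Ω`, `Q_U`, `U` shows that the gradients `∂U(ω, s)`,
viewed as a vector indexed by `S × O`, satisfy the linear equation `∂U = -A_Ω ∂β + P̃_γ ∂U`, where
`P̃_γ = P̃_γ^{(1)}` is nonnegative with row sums `γ`. Acting on sup-normed vectors, `P̃_γ` therefore
has norm at most `γ < 1`, and the equation is solved by the Neumann series `-∑ₖ P̃_γᵏ (A_Ω ∂β)`,
whose terms are bounded by a geometric sequence. The same contraction gives differentiability of
`U` in the first place: `U` is the fixed point of `U = c_ϑ + P̃_γ U` with data differentiable in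
`ϑ`, so `U = (1 - P̃_γ)⁻¹ c_ϑ`.
-/

open Finset

section Neumann

variable {V : Type*} [NormedAddCommGroup V] [NormedSpace ℝ V]

theorem eq_one_sub_apply_of_eq_add {T : V →L[ℝ] V} {D G : V} (hD : D = G + T D) :
    G = (1 - T) D := by
  rw [sub_apply, one_apply_eq_self]
  exact eq_sub_of_add_eq hD.symm

variable [CompleteSpace V]

theorem hasSum_pow_apply_of_eq_add {T : V →L[ℝ] V} (hT : ‖T‖ < 1) {D G : V}
    (hD : D = G + T D) : HasSum (fun k => (T ^ k) G) D := by
  have hsum := (summable_geometric_of_norm_lt_one hT).hasSum.mapL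
    (ContinuousLinearMap.apply ℝ V ((1 - T) D))
  rw [ContinuousLinearMap.apply_apply, ← mul_apply_eq_comp, geom_series_mul_neg T hT,
    one_apply_eq_self] at hsum
  simpa only [ContinuousLinearMap.apply_apply, ← eq_one_sub_apply_of_eq_add hD] using hsum

theorem differentiable_of_eq_add_apply {F : Type*} [NormedAddCommGroup F] [NormedSpace ℝ F]
    {T : F → V →L[ℝ] V} (hT : Differentiable ℝ T) (hTn : ∀ ϑ, ‖T ϑ‖ < 1) {c u : F → V}
    (hc : Differentiable ℝ c) (hu : ∀ ϑ, u ϑ = c ϑ + T ϑ (u ϑ)) : Differentiable ℝ u := by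
  have hunit : ∀ ϑ, IsUnit (1 - T ϑ) := fun ϑ => (Units.oneSub (T ϑ) (hTn ϑ)).isUnit
  have hsolve : u = fun ϑ => Ring.inverse (1 - T ϑ) (c ϑ) := by
    funext ϑ
    rw [eq_one_sub_apply_of_eq_add (hu ϑ), ← mul_apply_eq_comp,
      Ring.inverse_mul_cancel _ (hunit ϑ), one_apply_eq_self]
  rw [hsolve]
  exact ((differentiable_const 1).sub hT).inverse hunit |>.clm_apply hc

end Neumann

section KernelCLM

variable {X E : Type*} [Fintype X] [DecidableEq X] [NormedAddCommGroup E] [NormedSpace ℝ E]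
  {K : X → X → ℝ} {γ : ℝ} {Pk : ℕ → X → X → ℝ}

def kernelCLM (K : X → X → ℝ) : (X → E) →L[ℝ] (X → E) :=
  ∑ x, ∑ z, K x z • (ContinuousLinearMap.single ℝ (fun _ => E) x).comp
    (ContinuousLinearMap.proj z)

@[simp]
theorem kernelCLM_apply (K : X → X → ℝ) (v : X → E) (x : X) :
    kernelCLM K v x = ∑ z, K x z • v z := by
  simp [kernelCLM, Pi.single_apply]

theorem norm_kernelCLM_le (hγ : 0 ≤ γ) (hK : ∀ x, ∑ z, |K x z| ≤ γ) :
    ‖(kernelCLM K : (X → E) →L[ℝ] (X → E))‖ ≤ γ := by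
  refine ContinuousLinearMap.opNorm_le_bound _ hγ fun v => ?_
  refine (pi_norm_le_iff_of_nonneg (by positivity)).2 fun x => ?_
  calc ‖kernelCLM K v x‖ ≤ ∑ z, |K x z| * ‖v‖ := by
        rw [kernelCLM_apply]
        refine (norm_sum_le _ _).trans (sum_le_sum fun z _ => ?_)
        rw [norm_smul, Real.norm_eq_abs]
        exact mul_le_mul_of_nonneg_left (norm_le_pi_norm v z) (abs_nonneg _)
    _ ≤ γ * ‖v‖ := by
        rw [← sum_mul]
        exact mul_le_mul_of_nonneg_right (hK x) (norm_nonneg v)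

theorem kernelCLM_pow_apply (hPk0 : ∀ x y, Pk 0 x y = if x = y then 1 else 0)
    (hPkS : ∀ k x y, Pk (k + 1) x y = ∑ z, K x z * Pk k z y) (k : ℕ) (v : X → E) (x : X) :
    (kernelCLM K ^ k) v x = ∑ y, Pk k x y • v y := by
  induction k generalizing x with
  | zero => simp [hPk0]
  | succ k ih =>
    simp only [pow_succ', mul_apply_eq_comp, kernelCLM_apply, ih, smul_sum, smul_smul, hPkS,
      sum_smul]
    exact sum_comm

theorem differentiable_kernelCLM {F : Type*} [NormedAddCommGroup F] [NormedSpace ℝ F]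
    {K : F → X → X → ℝ} (hK : ∀ x z, Differentiable ℝ fun ϑ => K ϑ x z) :
    Differentiable ℝ fun ϑ => (kernelCLM (K ϑ) : (X → E) →L[ℝ] (X → E)) := by
  unfold kernelCLM
  fun_prop

theorem summable_norm_sum_iterate_smul (hγ0 : 0 ≤ γ) (hγ1 : γ < 1)
    (hK : ∀ x, ∑ z, |K x z| ≤ γ) (hPk0 : ∀ x y, Pk 0 x y = if x = y then 1 else 0)
    (hPkS : ∀ k x y, Pk (k + 1) x y = ∑ z, K x z * Pk k z y) (G : X → E) (x : X) :
    Summable fun k => ‖∑ y, Pk k x y • G y‖ := by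
  have hT : ‖(kernelCLM K : (X → E) →L[ℝ] (X → E))‖ < 1 :=
    (norm_kernelCLM_le hγ0 hK).trans_lt hγ1
  refine ((summable_norm_geometric_of_norm_lt_one hT).mul_right ‖G‖).of_nonneg_of_le
    (fun k => norm_nonneg _) fun k => ?_
  rw [← kernelCLM_pow_apply hPk0 hPkS]
  exact (norm_le_pi_norm _ x).trans ((kernelCLM K ^ k).le_opNorm G)

theorem hasSum_sum_iterate_smul_of_eq_add [CompleteSpace E] (hγ0 : 0 ≤ γ) (hγ1 : γ < 1)
    (hK : ∀ x, ∑ z, |K x z| ≤ γ) (hPk0 : ∀ x y, Pk 0 x y = if x = y then 1 else 0)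
    (hPkS : ∀ k x y, Pk (k + 1) x y = ∑ z, K x z * Pk k z y) {D G : X → E}
    (hD : ∀ x, D x = G x + ∑ z, K x z • D z) (x : X) :
    HasSum (fun k => ∑ y, Pk k x y • G y) (D x) := by
  have hT : ‖(kernelCLM K : (X → E) →L[ℝ] (X → E))‖ < 1 :=
    (norm_kernelCLM_le hγ0 hK).trans_lt hγ1
  simp only [← kernelCLM_pow_apply hPk0 hPkS]
  exact Pi.hasSum.1 (hasSum_pow_apply_of_eq_add hT (funext fun y => by simpa using hD y)) x

end KernelCLM

section OptionMDP

variable {S A O F : Type*}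
  (P : S → A → S → ℝ) (γ : ℝ) (π : O → S → A → ℝ) (β : F → O → S → ℝ) (πΩ : S → O → ℝ)

def switchProb [DecidableEq O] (ϑ : F) (s : S) (ω ω' : O) : ℝ :=
  (1 - β ϑ ω s) * (if ω' = ω then 1 else 0) + β ϑ ω s * πΩ s ω'

def stepKernel [Fintype A] (s : S) (ω : O) (s₂ : S) : ℝ :=
  ∑ a, π ω s a * (γ * P s a s₂)

/-- `shiftedKernel P γ π β πΩ ϑ (s, ω) (s₂, ω')` is `P̃_γ^{(1)}(s₂, ω' | s, ω)`. -/
def shiftedKernel [Fintype A] [DecidableEq O] (ϑ : F) (x z : S × O) : ℝ :=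
  switchProb β πΩ ϑ x.1 x.2 z.2 * stepKernel P γ π x.1 z.2 z.1

def advantage [Fintype O] {Θ : Type*} (Q : Θ → S → O → ℝ) (ϑ : Θ) (s : S) (ω : O) : ℝ :=
  Q ϑ s ω - ∑ ω', πΩ s ω' * Q ϑ s ω'

variable {P γ π β πΩ}
variable {r : S → A → ℝ} {Q : F → S → O → ℝ} {U : F → O → S → ℝ} {QU : F → S → O → A → ℝ}

theorem switchProb_nonneg [DecidableEq O] (hβ0 : ∀ ϑ ω s, 0 ≤ β ϑ ω s)
    (hβ1 : ∀ ϑ ω s, β ϑ ω s ≤ 1) (hπΩ0 : ∀ s ω, 0 ≤ πΩ s ω) (ϑ : F) (s : S) (ω ω' : O) :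
    0 ≤ switchProb β πΩ ϑ s ω ω' := by
  have := hβ1 ϑ ω s
  unfold switchProb
  split_ifs <;> nlinarith [hβ0 ϑ ω s, hπΩ0 s ω']

theorem sum_switchProb [Fintype O] [DecidableEq O] (hπΩ1 : ∀ s, ∑ ω, πΩ s ω = 1) (ϑ : F)
    (s : S) (ω : O) : ∑ ω', switchProb β πΩ ϑ s ω ω' = 1 := by
  simp [switchProb, sum_add_distrib, ← mul_sum, hπΩ1]

theorem stepKernel_nonneg [Fintype A] (hP0 : ∀ s a s', 0 ≤ P s a s') (hγ0 : 0 ≤ γ)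
    (hπ0 : ∀ ω s a, 0 ≤ π ω s a) (s : S) (ω : O) (s₂ : S) : 0 ≤ stepKernel P γ π s ω s₂ :=
  sum_nonneg fun a _ => mul_nonneg (hπ0 ω s a) (mul_nonneg hγ0 (hP0 s a s₂))

theorem sum_stepKernel [Fintype S] [Fintype A] (hP1 : ∀ s a, ∑ s', P s a s' = 1)
    (hπ1 : ∀ ω s, ∑ a, π ω s a = 1) (s : S) (ω : O) : ∑ s₂, stepKernel P γ π s ω s₂ = γ := by
  simp only [stepKernel]
  rw [sum_comm]
  simp [← mul_sum, hP1, ← sum_mul, hπ1]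

theorem sum_shiftedKernel [Fintype S] [Fintype A] [Fintype O] [DecidableEq O]
    (hP1 : ∀ s a, ∑ s', P s a s' = 1) (hπ1 : ∀ ω s, ∑ a, π ω s a = 1)
    (hπΩ1 : ∀ s, ∑ ω, πΩ s ω = 1) (ϑ : F) (x : S × O) :
    ∑ z, shiftedKernel P γ π β πΩ ϑ x z = γ := by
  simp [shiftedKernel, Fintype.sum_prod_type_right, ← mul_sum, sum_stepKernel hP1 hπ1,
    ← sum_mul, sum_switchProb hπΩ1]

theorem sum_abs_shiftedKernel [Fintype S] [Fintype A] [Fintype O] [DecidableEq O]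
    (hP0 : ∀ s a s', 0 ≤ P s a s') (hP1 : ∀ s a, ∑ s', P s a s' = 1) (hγ0 : 0 ≤ γ)
    (hπ0 : ∀ ω s a, 0 ≤ π ω s a) (hπ1 : ∀ ω s, ∑ a, π ω s a = 1)
    (hβ0 : ∀ ϑ ω s, 0 ≤ β ϑ ω s) (hβ1 : ∀ ϑ ω s, β ϑ ω s ≤ 1)
    (hπΩ0 : ∀ s ω, 0 ≤ πΩ s ω) (hπΩ1 : ∀ s, ∑ ω, πΩ s ω = 1) (ϑ : F) (x : S × O) :
    ∑ z, |shiftedKernel P γ π β πΩ ϑ x z| = γ := by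
  refine (sum_congr rfl fun z _ => abs_of_nonneg ?_).trans (sum_shiftedKernel hP1 hπ1 hπΩ1 ϑ x)
  exact mul_nonneg (switchProb_nonneg hβ0 hβ1 hπΩ0 ..) (stepKernel_nonneg hP0 hγ0 hπ0 ..)

theorem U_eq_sum_switchProb_mul [Fintype O] [DecidableEq O]
    (hU : ∀ ϑ ω s', U ϑ ω s' =
      (1 - β ϑ ω s') * Q ϑ s' ω + β ϑ ω s' * ∑ ω', πΩ s' ω' * Q ϑ s' ω')
    (ϑ : F) (ω : O) (s : S) :
    U ϑ ω s = ∑ ω', switchProb β πΩ ϑ s ω ω' * Q ϑ s ω' := by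
  simp [hU, switchProb, add_mul, sum_add_distrib, mul_assoc, ← mul_sum]

theorem Q_eq_add_sum_stepKernel_mul [Fintype S] [Fintype A]
    (hQ : ∀ ϑ s ω, Q ϑ s ω = ∑ a, π ω s a * QU ϑ s ω a)
    (hQU : ∀ ϑ s ω a, QU ϑ s ω a = r s a + γ * ∑ s', P s a s' * U ϑ ω s')
    (ϑ : F) (s : S) (ω : O) :
    Q ϑ s ω = ∑ a, π ω s a * r s a + ∑ s₂, stepKernel P γ π s ω s₂ * U ϑ ω s₂ := by
  simp only [hQ, hQU, stepKernel, mul_add, sum_add_distrib, mul_sum, sum_mul]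
  rw [sum_comm (s := univ (α := A))]
  simp only [mul_assoc]

theorem U_eq_add_sum_shiftedKernel_mul [Fintype S] [Fintype A] [Fintype O] [DecidableEq O]
    (hQ : ∀ ϑ s ω, Q ϑ s ω = ∑ a, π ω s a * QU ϑ s ω a)
    (hQU : ∀ ϑ s ω a, QU ϑ s ω a = r s a + γ * ∑ s', P s a s' * U ϑ ω s')
    (hU : ∀ ϑ ω s', U ϑ ω s' =
      (1 - β ϑ ω s') * Q ϑ s' ω + β ϑ ω s' * ∑ ω', πΩ s' ω' * Q ϑ s' ω')
    (ϑ : F) (x : S × O) :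
    U ϑ x.2 x.1 = ∑ ω', switchProb β πΩ ϑ x.1 x.2 ω' * ∑ a, π ω' x.1 a * r x.1 a +
      ∑ z, shiftedKernel P γ π β πΩ ϑ x z * U ϑ z.2 z.1 := by
  rw [U_eq_sum_switchProb_mul hU]
  simp only [Q_eq_add_sum_stepKernel_mul hQ hQU, mul_add,
    sum_add_distrib, shiftedKernel, Fintype.sum_prod_type_right, mul_sum, mul_assoc]

theorem sum_mul_sub_ite_eq_neg_advantage [Fintype O] [DecidableEq O] (ϑ : F) (s : S) (ω : O) :
    ∑ ω', Q ϑ s ω' * (πΩ s ω' - if ω' = ω then 1 else 0) = -advantage πΩ Q ϑ s ω := by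
  simp [advantage, mul_sub, sum_sub_distrib, mul_comm]

variable [NormedAddCommGroup F] [NormedSpace ℝ F]

theorem differentiable_U [Fintype S] [Fintype A] [Fintype O] [DecidableEq S] [DecidableEq O]
    (hP0 : ∀ s a s', 0 ≤ P s a s') (hP1 : ∀ s a, ∑ s', P s a s' = 1)
    (hγ0 : 0 ≤ γ) (hγ1 : γ < 1)
    (hπ0 : ∀ ω s a, 0 ≤ π ω s a) (hπ1 : ∀ ω s, ∑ a, π ω s a = 1)
    (hβ0 : ∀ ϑ ω s, 0 ≤ β ϑ ω s) (hβ1 : ∀ ϑ ω s, β ϑ ω s ≤ 1)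
    (hπΩ0 : ∀ s ω, 0 ≤ πΩ s ω) (hπΩ1 : ∀ s, ∑ ω, πΩ s ω = 1)
    (hQ : ∀ ϑ s ω, Q ϑ s ω = ∑ a, π ω s a * QU ϑ s ω a)
    (hQU : ∀ ϑ s ω a, QU ϑ s ω a = r s a + γ * ∑ s', P s a s' * U ϑ ω s')
    (hU : ∀ ϑ ω s', U ϑ ω s' =
      (1 - β ϑ ω s') * Q ϑ s' ω + β ϑ ω s' * ∑ ω', πΩ s' ω' * Q ϑ s' ω')
    (hβdiff : ∀ ω s, Differentiable ℝ (fun ϑ => β ϑ ω s)) (ω : O) (s : S) :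
    Differentiable ℝ (fun ϑ => U ϑ ω s) := by
  have hswitch : ∀ s ω ω', Differentiable ℝ fun ϑ => switchProb β πΩ ϑ s ω ω' := by
    unfold switchProb
    fun_prop
  have hnorm : ∀ ϑ, ‖(kernelCLM (shiftedKernel P γ π β πΩ ϑ) :
      (S × O → ℝ) →L[ℝ] (S × O → ℝ))‖ < 1 := fun ϑ =>
    (norm_kernelCLM_le hγ0 fun x =>
      (sum_abs_shiftedKernel hP0 hP1 hγ0 hπ0 hπ1 hβ0 hβ1 hπΩ0 hπΩ1 ϑ x).le).trans_lt hγ1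
  have hkernel : Differentiable ℝ fun ϑ => (kernelCLM (shiftedKernel P γ π β πΩ ϑ) :
      (S × O → ℝ) →L[ℝ] (S × O → ℝ)) :=
    differentiable_kernelCLM fun x z => (hswitch x.1 x.2 z.2).mul_const _
  have hfix : Differentiable ℝ fun ϑ (x : S × O) => U ϑ x.2 x.1 :=
    differentiable_of_eq_add_apply hkernel hnorm
      (c := fun ϑ x => ∑ ω', switchProb β πΩ ϑ x.1 x.2 ω' * ∑ a, π ω' x.1 a * r x.1 a)
      (by fun_prop) fun ϑ => funext fun x => by
        simpa using U_eq_add_sum_shiftedKernel_mul hQ hQU hU ϑ x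
  exact differentiable_pi.1 hfix (s, ω)

theorem hasFDerivAt_switchProb [DecidableEq O] {ϑ₀ : F} {s : S} {ω : O}
    (hβ : DifferentiableAt ℝ (fun ϑ => β ϑ ω s) ϑ₀) (ω' : O) :
    HasFDerivAt (fun ϑ => switchProb β πΩ ϑ s ω ω')
      ((πΩ s ω' - if ω' = ω then 1 else 0) • fderiv ℝ (fun ϑ => β ϑ ω s) ϑ₀) ϑ₀ := by
  have h := hβ.hasFDerivAt
  refine (((h.const_sub 1).mul_const _).add (h.mul_const (πΩ s ω'))).congr_fderiv ?_
  rw [sub_smul, smul_neg]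
  abel

theorem hasFDerivAt_Q [Fintype S] [Fintype A] {ϑ₀ : F}
    (hQ : ∀ ϑ s ω, Q ϑ s ω = ∑ a, π ω s a * QU ϑ s ω a)
    (hQU : ∀ ϑ s ω a, QU ϑ s ω a = r s a + γ * ∑ s', P s a s' * U ϑ ω s')
    (hUd : ∀ ω s, DifferentiableAt ℝ (fun ϑ => U ϑ ω s) ϑ₀) (s : S) (ω : O) :
    HasFDerivAt (fun ϑ => Q ϑ s ω)
      (∑ s₂, stepKernel P γ π s ω s₂ • fderiv ℝ (fun ϑ => U ϑ ω s₂) ϑ₀) ϑ₀ := by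
  simp only [Q_eq_add_sum_stepKernel_mul hQ hQU]
  exact (HasFDerivAt.fun_sum (u := univ) fun s₂ _ =>
    (hUd ω s₂).hasFDerivAt.const_mul (stepKernel P γ π s ω s₂)).const_add _

theorem fderiv_U_eq [Fintype S] [Fintype A] [Fintype O] [DecidableEq O] {ϑ₀ : F}
    (hQ : ∀ ϑ s ω, Q ϑ s ω = ∑ a, π ω s a * QU ϑ s ω a)
    (hQU : ∀ ϑ s ω a, QU ϑ s ω a = r s a + γ * ∑ s', P s a s' * U ϑ ω s')
    (hU : ∀ ϑ ω s', U ϑ ω s' =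
      (1 - β ϑ ω s') * Q ϑ s' ω + β ϑ ω s' * ∑ ω', πΩ s' ω' * Q ϑ s' ω')
    (hβd : ∀ ω s, DifferentiableAt ℝ (fun ϑ => β ϑ ω s) ϑ₀)
    (hUd : ∀ ω s, DifferentiableAt ℝ (fun ϑ => U ϑ ω s) ϑ₀) (x : S × O) :
    fderiv ℝ (fun ϑ => U ϑ x.2 x.1) ϑ₀ =
      -(advantage πΩ Q ϑ₀ x.1 x.2 • fderiv ℝ (fun ϑ => β ϑ x.2 x.1) ϑ₀) +
        ∑ z, shiftedKernel P γ π β πΩ ϑ₀ x z • fderiv ℝ (fun ϑ => U ϑ z.2 z.1) ϑ₀ := by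
  have hderiv : HasFDerivAt (fun ϑ => ∑ ω', switchProb β πΩ ϑ x.1 x.2 ω' * Q ϑ x.1 ω') _ ϑ₀ :=
    HasFDerivAt.fun_sum fun ω' _ =>
      (hasFDerivAt_switchProb (hβd x.2 x.1) ω').mul (hasFDerivAt_Q hQ hQU hUd x.1 ω')
  rw [funext fun ϑ => U_eq_sum_switchProb_mul hU ϑ x.2 x.1, hderiv.fderiv, sum_add_distrib,
    add_comm]
  congr 1
  · simp only [smul_smul, ← sum_smul, sum_mul_sub_ite_eq_neg_advantage, neg_smul]
  · simp only [shiftedKernel, Fintype.sum_prod_type_right, smul_sum, smul_smul]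

end OptionMDP

/-- **Series expansion of the termination gradient.** Under the assumptions of the
Termination Gradient Theorem, for every option `ω` and state `s'`:
`∂U(ω,s')/∂ϑ = −∑_{k=0}^∞ ∑_{ω'',s''} P̃_γ^{(k)}(s'',ω''|s',ω) ∂β_{ω'',ϑ}(s'')/∂ϑ · A_Ω(s'',ω'')`,
where `A_Ω(s'',ω'') = Q_Ω(s'',ω'') − V_Ω(s'')` and the series converges absolutely. -/
theorem termination_gradient_series_expansion
    {S A O : Type*} [Fintype S] [Fintype A] [Fintype O]
    [DecidableEq S] [DecidableEq O]
    {m : ℕ} (ϑ₀ : Fin m → ℝ)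
    (P : S → A → S → ℝ) (r : S → A → ℝ) (γ : ℝ)
    (hP0 : ∀ s a s', 0 ≤ P s a s') (hP1 : ∀ s a, ∑ s', P s a s' = 1)
    (hγ0 : 0 ≤ γ) (hγ1 : γ < 1)
    (π : O → S → A → ℝ)
    (hπ0 : ∀ ω s a, 0 ≤ π ω s a) (hπ1 : ∀ ω s, ∑ a, π ω s a = 1)
    (β : (Fin m → ℝ) → O → S → ℝ)
    (hβ0 : ∀ ϑ ω s, 0 ≤ β ϑ ω s) (hβ1 : ∀ ϑ ω s, β ϑ ω s ≤ 1)
    (πΩ : S → O → ℝ) (hπΩ0 : ∀ s ω, 0 ≤ πΩ s ω) (hπΩ1 : ∀ s, ∑ ω, πΩ s ω = 1)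
    (Q : (Fin m → ℝ) → S → O → ℝ) (U : (Fin m → ℝ) → O → S → ℝ)
    (QU : (Fin m → ℝ) → S → O → A → ℝ)
    (hQ : ∀ ϑ s ω, Q ϑ s ω = ∑ a, π ω s a * QU ϑ s ω a)
    (hQU : ∀ ϑ s ω a, QU ϑ s ω a = r s a + γ * ∑ s', P s a s' * U ϑ ω s')
    (hU : ∀ ϑ ω s', U ϑ ω s' =
      (1 - β ϑ ω s') * Q ϑ s' ω + β ϑ ω s' * ∑ ω', πΩ s' ω' * Q ϑ s' ω')
    -- the k-step shifted discounted augmented transition kernel at `ϑ₀`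
    (Pk : ℕ → (S × O) → (S × O) → ℝ)
    (hPk0 : ∀ x y, Pk 0 x y = if x = y then 1 else 0)
    (hPkS : ∀ k x y, Pk (k + 1) x y = ∑ z : S × O,
      (((1 - β ϑ₀ x.2 x.1) * (if z.2 = x.2 then 1 else 0) + β ϑ₀ x.2 x.1 * πΩ x.1 z.2) *
        ∑ a, π z.2 x.1 a * (γ * P x.1 a z.1)) * Pk k z y)
    (hβdiff : ∀ ω s, Differentiable ℝ (fun ϑ => β ϑ ω s))
    (ω : O) (s' : S) :
    Summable (fun k => ‖∑ s'', ∑ ω'', Pk k (s', ω) (s'', ω'') •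
      ((Q ϑ₀ s'' ω'' - ∑ ω', πΩ s'' ω' * Q ϑ₀ s'' ω') •
        fderiv ℝ (fun ϑ => β ϑ ω'' s'') ϑ₀)‖) ∧
    fderiv ℝ (fun ϑ => U ϑ ω s') ϑ₀ =
      -∑' k, ∑ s'', ∑ ω'', Pk k (s', ω) (s'', ω'') •
        ((Q ϑ₀ s'' ω'' - ∑ ω', πΩ s'' ω' * Q ϑ₀ s'' ω') •
          fderiv ℝ (fun ϑ => β ϑ ω'' s'') ϑ₀) := by
  have hUd := differentiable_U hP0 hP1 hγ0 hγ1 hπ0 hπ1 hβ0 hβ1 hπΩ0 hπΩ1 hQ hQU hU hβdiff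
  have hD := fderiv_U_eq hQ hQU hU (fun ω s => hβdiff ω s ϑ₀) (fun ω s => hUd ω s ϑ₀)
  have hrow x := (sum_abs_shiftedKernel hP0 hP1 hγ0 hπ0 hπ1 hβ0 hβ1 hπΩ0 hπΩ1 ϑ₀ x).le
  have hsummable := summable_norm_sum_iterate_smul hγ0 hγ1 hrow hPk0 hPkS
    (fun y => advantage πΩ Q ϑ₀ y.1 y.2 • fderiv ℝ (fun ϑ => β ϑ y.2 y.1) ϑ₀) (s', ω)
  have hsum := hasSum_sum_iterate_smul_of_eq_add hγ0 hγ1 hrow hPk0 hPkS hD (s', ω)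
  simp only [smul_neg, sum_neg_distrib, Fintype.sum_prod_type] at hsummable hsum
  refine ⟨hsummable, ?_⟩
  rw [← hsum.tsum_eq, tsum_neg]
  rfl
end

section
/- Differentiability of the option value functions in the termination parameters: if for every option ω and state s the map ϑ ↦ β_{ω,ϑ}(s) from ℝ^m to [0,1] is continuously differentiable, then for every (s, ω) the maps ϑ ↦ Q_Ω^ϑ(s, ω) and ϑ ↦ U^ϑ(ω, s) are differentiable on ℝ^m. -/
/-!
Index the option values by pairs `(s, ω)`. Writing `T_ϑ` for the matrix of "keep `ω` with
probability `1 - β_{ω,ϑ}(s)`, otherwise redraw it from `π_Ω(·|s)`" and `Π` for the matrix of one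
primitive step under `π_ω`, the defining equations read `U^ϑ = T_ϑ Q^ϑ` and
`Q^ϑ = b + γ Π U^ϑ`, so `Q^ϑ = b + γ K_ϑ Q^ϑ` with `K_ϑ = Π T_ϑ` row-stochastic and
differentiable in `ϑ`. As `γ < 1`, the matrix `1 - γ K_ϑ` is strictly diagonally dominant, hence
invertible, and Cramer's rule writes each `Q^ϑ(s, ω)` as a quotient of determinants, which are
polynomials in the entries of `K_ϑ`. Differentiability of `U^ϑ` then follows from its equation.
-/

open Matrix

section LinearSystem

variable {𝕜 E ι : Type*} [NontriviallyNormedField 𝕜] [NormedAddCommGroup E] [NormedSpace 𝕜 E]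
  [Fintype ι] [DecidableEq ι]

theorem differentiable_det_of_entries {A : E → Matrix ι ι 𝕜}
    (hA : ∀ i j, Differentiable 𝕜 fun θ => A θ i j) : Differentiable 𝕜 fun θ => (A θ).det := by
  simp only [det_apply']
  exact Differentiable.fun_sum fun σ _ => Differentiable.const_mul (fun θ =>
    (HasFDerivAt.finsetProd fun i _ => (hA (σ i) i θ).hasFDerivAt).differentiableAt) _

theorem Matrix.eq_det_inv_smul_cramer_of_mulVec_eq {A : Matrix ι ι 𝕜} {x b : ι → 𝕜}
    (hA : A.det ≠ 0) (hx : A *ᵥ x = b) : x = A.det⁻¹ • cramer A b := by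
  have hunit : IsUnit A.det := hA.isUnit
  rw [← det_smul_inv_mulVec_eq_cramer A b hunit, ← hx, mulVec_mulVec, nonsing_inv_mul A hunit,
    one_mulVec, inv_smul_smul₀ hA]

theorem differentiable_apply_of_mulVec_eq {A : E → Matrix ι ι 𝕜} {x b : E → ι → 𝕜}
    (hA : ∀ i j, Differentiable 𝕜 fun θ => A θ i j) (hb : ∀ i, Differentiable 𝕜 fun θ => b θ i)
    (hdet : ∀ θ, (A θ).det ≠ 0) (hx : ∀ θ, A θ *ᵥ x θ = b θ) (i : ι) :
    Differentiable 𝕜 fun θ => x θ i := by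
  have hcramer : ∀ θ, x θ i = (A θ).det⁻¹ * ((A θ).updateCol i (b θ)).det := fun θ => by
    rw [eq_det_inv_smul_cramer_of_mulVec_eq (hdet θ) (hx θ), Pi.smul_apply, cramer_apply,
      smul_eq_mul]
  simp only [hcramer]
  refine ((differentiable_det_of_entries hA).inv hdet).mul (differentiable_det_of_entries ?_)
  intro k j
  simp only [updateCol_apply]
  split_ifs
  exacts [hb k, hA k j]

end LinearSystem

section Stochastic

variable {ι : Type*} [Fintype ι] [DecidableEq ι]

theorem det_one_sub_smul_ne_zero_of_mem_rowStochastic {M : Matrix ι ι ℝ}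
    (hM : M ∈ rowStochastic ℝ ι) {γ : ℝ} (hγ : |γ| < 1) : (1 - γ • M).det ≠ 0 := by
  refine det_ne_zero_of_sum_row_lt_diag fun k => ?_
  have hoff : ∑ j ∈ Finset.univ.erase k, ‖(1 - γ • M) k j‖ = |γ| * (1 - M k k) := by
    rw [← sum_row_of_mem_rowStochastic hM k, ← Finset.sum_erase_eq_sub (Finset.mem_univ k),
      Finset.mul_sum]
    refine Finset.sum_congr rfl fun j hj => ?_
    rw [Matrix.sub_apply, one_apply_ne' (Finset.ne_of_mem_erase hj), Matrix.smul_apply,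
      smul_eq_mul, zero_sub, norm_neg, norm_mul, Real.norm_eq_abs, Real.norm_eq_abs,
      abs_of_nonneg (nonneg_of_mem_rowStochastic hM)]
  have hdiag : 1 - |γ| * M k k ≤ ‖(1 - γ • M) k k‖ := by
    rw [Matrix.sub_apply, one_apply_eq, Matrix.smul_apply, smul_eq_mul, Real.norm_eq_abs]
    simpa [abs_mul, abs_of_nonneg (nonneg_of_mem_rowStochastic hM)] using
      abs_sub_abs_le_abs_sub 1 (γ * M k k)
  rw [hoff]
  linarith

theorem differentiable_apply_of_eq_add_smul_mulVec {E : Type*} [NormedAddCommGroup E]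
    [NormedSpace ℝ E] {K : E → Matrix ι ι ℝ} {x b : E → ι → ℝ} {γ : ℝ} (hγ : |γ| < 1)
    (hK : ∀ θ, K θ ∈ rowStochastic ℝ ι) (hKd : ∀ i j, Differentiable ℝ fun θ => K θ i j)
    (hb : ∀ i, Differentiable ℝ fun θ => b θ i) (hx : ∀ θ, x θ = b θ + γ • K θ *ᵥ x θ)
    (i : ι) : Differentiable ℝ fun θ => x θ i := by
  refine differentiable_apply_of_mulVec_eq (A := fun θ => 1 - γ • K θ) (fun k j => ?_) hb
    (fun θ => det_one_sub_smul_ne_zero_of_mem_rowStochastic (hK θ) hγ) (fun θ => ?_) i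
  · simp only [Matrix.sub_apply, Matrix.smul_apply, smul_eq_mul]
    exact (differentiable_const _).sub ((hKd k j).const_mul γ)
  · rw [sub_mulVec, one_mulVec, smul_mulVec, sub_eq_iff_eq_add, ← hx θ]

end Stochastic

section Options

variable {S A O : Type*}

def intraOptionTransition [Fintype A] [DecidableEq O] (P : S → A → S → ℝ)
    (π : O → S → A → ℝ) : Matrix (S × O) (S × O) ℝ :=
  of fun p q => if p.2 = q.2 then ∑ a, π p.2 p.1 a * P p.1 a q.1 else 0

def optionSwitch [DecidableEq S] [DecidableEq O] (β : O → S → ℝ) (πΩ : S → O → ℝ) :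
    Matrix (S × O) (S × O) ℝ :=
  of fun p q => if p.1 = q.1 then
    (if p.2 = q.2 then 1 - β p.2 p.1 else 0) + β p.2 p.1 * πΩ p.1 q.2 else 0

theorem differentiable_optionSwitch_apply [DecidableEq S] [DecidableEq O] {E : Type*}
    [NormedAddCommGroup E] [NormedSpace ℝ E] {β : E → O → S → ℝ} (πΩ : S → O → ℝ)
    (hβ : ∀ ω s, Differentiable ℝ fun θ => β θ ω s) (p q : S × O) :
    Differentiable ℝ fun θ => optionSwitch (β θ) πΩ p q := by
  simp only [optionSwitch, of_apply]
  split_ifs <;> fun_prop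

variable [Fintype S] [Fintype A] [Fintype O] [DecidableEq O]

theorem intraOptionTransition_mulVec_apply (P : S → A → S → ℝ) (π : O → S → A → ℝ)
    (v : S × O → ℝ) (s : S) (ω : O) :
    (intraOptionTransition P π *ᵥ v) (s, ω) = ∑ a, π ω s a * ∑ s', P s a s' * v (s', ω) := by
  simp only [intraOptionTransition, mulVec, dotProduct, of_apply, Fintype.sum_prod_type, ite_mul,
    zero_mul, Finset.sum_ite_eq, Finset.mem_univ, if_true, Finset.sum_mul, Finset.mul_sum,
    mul_assoc]
  exact Finset.sum_comm

variable [DecidableEq S]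

theorem optionSwitch_mulVec_apply (β : O → S → ℝ) (πΩ : S → O → ℝ) (v : S × O → ℝ) (s : S)
    (ω : O) : (optionSwitch β πΩ *ᵥ v) (s, ω) =
      (1 - β ω s) * v (s, ω) + β ω s * ∑ ω', πΩ s ω' * v (s, ω') := by
  simp only [mulVec, dotProduct, optionSwitch, of_apply, ite_mul, add_mul, zero_mul, mul_assoc,
    Fintype.sum_prod_type, Finset.sum_ite_irrel, Finset.sum_add_distrib, Finset.sum_ite_eq,
    Finset.mem_univ, ↓reduceIte, Finset.sum_const_zero, Finset.mul_sum]

theorem intraOptionTransition_mem_rowStochastic {P : S → A → S → ℝ} {π : O → S → A → ℝ}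
    (hP0 : ∀ s a s', 0 ≤ P s a s') (hP1 : ∀ s a, ∑ s', P s a s' = 1)
    (hπ0 : ∀ ω s a, 0 ≤ π ω s a) (hπ1 : ∀ ω s, ∑ a, π ω s a = 1) :
    intraOptionTransition P π ∈ rowStochastic ℝ (S × O) := by
  refine ⟨fun p q => ?_, funext fun ⟨s, ω⟩ => ?_⟩
  · simp only [intraOptionTransition, of_apply]
    split_ifs
    exacts [Finset.sum_nonneg fun a _ => mul_nonneg (hπ0 _ _ _) (hP0 _ _ _), le_rfl]
  · simp [intraOptionTransition_mulVec_apply, hP1, hπ1]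

theorem optionSwitch_mem_rowStochastic {β : O → S → ℝ} {πΩ : S → O → ℝ}
    (hβ0 : ∀ ω s, 0 ≤ β ω s) (hβ1 : ∀ ω s, β ω s ≤ 1)
    (hπΩ0 : ∀ s ω, 0 ≤ πΩ s ω) (hπΩ1 : ∀ s, ∑ ω, πΩ s ω = 1) :
    optionSwitch β πΩ ∈ rowStochastic ℝ (S × O) := by
  refine ⟨fun p q => ?_, funext fun ⟨s, ω⟩ => ?_⟩
  · simp only [optionSwitch, of_apply]
    have := hβ1 p.2 p.1
    split_ifs <;> nlinarith [hβ0 p.2 p.1, hπΩ0 p.1 q.2]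
  · simp [optionSwitch_mulVec_apply, hπΩ1]

theorem optionValue_eq_add_smul_mulVec {P : S → A → S → ℝ} {r : S → A → ℝ}
    {γ : ℝ} {π : O → S → A → ℝ} {β : O → S → ℝ} {πΩ : S → O → ℝ} {Q : S → O → ℝ}
    {U : O → S → ℝ} {QU : S → O → A → ℝ}
    (hQ : ∀ s ω, Q s ω = ∑ a, π ω s a * QU s ω a)
    (hQU : ∀ s ω a, QU s ω a = r s a + γ * ∑ s', P s a s' * U ω s')
    (hU : ∀ ω s', U ω s' = (1 - β ω s') * Q s' ω + β ω s' * ∑ ω', πΩ s' ω' * Q s' ω') :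
    (fun p : S × O => Q p.1 p.2) = (fun p => ∑ a, π p.2 p.1 a * r p.1 a) +
      γ • (intraOptionTransition P π * optionSwitch β πΩ) *ᵥ fun p => Q p.1 p.2 := by
  funext ⟨s, ω⟩
  simp only [← mulVec_mulVec, Pi.add_apply, Pi.smul_apply, smul_eq_mul,
    intraOptionTransition_mulVec_apply, optionSwitch_mulVec_apply, ← hU]
  simp only [hQ s ω, hQU, mul_add, Finset.sum_add_distrib, Finset.mul_sum, mul_left_comm]

end Options

/-- **Differentiability of the option value functions in the termination parameters.**
If every map `ϑ ↦ β_{ω,ϑ}(s)` (with values in `[0,1]`) is continuously differentiable,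
then `ϑ ↦ Q_Ω^ϑ(s,ω)` and `ϑ ↦ U^ϑ(ω,s)` are differentiable on `ℝ^m`. -/
theorem option_value_differentiable_in_termination_parameters
    {S A O : Type*} [Fintype S] [Fintype A] [Fintype O]
    {m : ℕ}
    (P : S → A → S → ℝ) (r : S → A → ℝ) (γ : ℝ)
    (hP0 : ∀ s a s', 0 ≤ P s a s') (hP1 : ∀ s a, ∑ s', P s a s' = 1)
    (hγ0 : 0 ≤ γ) (hγ1 : γ < 1)
    (π : O → S → A → ℝ)
    (hπ0 : ∀ ω s a, 0 ≤ π ω s a) (hπ1 : ∀ ω s, ∑ a, π ω s a = 1)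
    (β : (Fin m → ℝ) → O → S → ℝ)
    (hβ0 : ∀ ϑ ω s, 0 ≤ β ϑ ω s) (hβ1 : ∀ ϑ ω s, β ϑ ω s ≤ 1)
    (hβC1 : ∀ ω s, ContDiff ℝ 1 (fun ϑ => β ϑ ω s))
    (πΩ : S → O → ℝ) (hπΩ0 : ∀ s ω, 0 ≤ πΩ s ω) (hπΩ1 : ∀ s, ∑ ω, πΩ s ω = 1)
    (Q : (Fin m → ℝ) → S → O → ℝ) (U : (Fin m → ℝ) → O → S → ℝ)
    (QU : (Fin m → ℝ) → S → O → A → ℝ)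
    (hQ : ∀ ϑ s ω, Q ϑ s ω = ∑ a, π ω s a * QU ϑ s ω a)
    (hQU : ∀ ϑ s ω a, QU ϑ s ω a = r s a + γ * ∑ s', P s a s' * U ϑ ω s')
    (hU : ∀ ϑ ω s', U ϑ ω s' =
      (1 - β ϑ ω s') * Q ϑ s' ω + β ϑ ω s' * ∑ ω', πΩ s' ω' * Q ϑ s' ω') :
    (∀ s ω, Differentiable ℝ (fun ϑ => Q ϑ s ω)) ∧
    (∀ ω s, Differentiable ℝ (fun ϑ => U ϑ ω s)) := by
  classical
  have hβd : ∀ ω s, Differentiable ℝ fun ϑ => β ϑ ω s := fun ω s =>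
    (hβC1 ω s).differentiable one_ne_zero
  set K := fun ϑ => intraOptionTransition P π * optionSwitch (β ϑ) πΩ
  have hK : ∀ ϑ, K ϑ ∈ rowStochastic ℝ (S × O) :=
    fun ϑ => mul_mem (intraOptionTransition_mem_rowStochastic hP0 hP1 hπ0 hπ1)
      (optionSwitch_mem_rowStochastic (hβ0 ϑ) (hβ1 ϑ) hπΩ0 hπΩ1)
  have hKd : ∀ p q, Differentiable ℝ fun ϑ => K ϑ p q := fun p q => by
    simp only [K, mul_apply]
    exact Differentiable.fun_sum fun k _ =>
      (differentiable_optionSwitch_apply πΩ hβd k q).const_mul _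
  have hQd : ∀ s ω, Differentiable ℝ fun ϑ => Q ϑ s ω := fun s ω =>
    differentiable_apply_of_eq_add_smul_mulVec (x := fun ϑ p => Q ϑ p.1 p.2)
      (b := fun _ p => ∑ a, π p.2 p.1 a * r p.1 a)
      (abs_lt.2 ⟨by linarith, hγ1⟩) hK hKd (fun _ => differentiable_const _)
      (fun ϑ => optionValue_eq_add_smul_mulVec (hQ ϑ) (hQU ϑ) (hU ϑ)) (s, ω)
  refine ⟨hQd, fun ω s => ?_⟩
  simp only [hU]
  fun_prop
end
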